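/- arXiv:2511.03033 — 4 statements merged into one kernel-verified Lean document; each statement's English description precedes it below -/
import Mathlib

section
/- Fix α ∈ (0,3) and m > 3. There is a constant C = C(α,m) such that for all v ∈ ℝ³, ∫_{ℝ³} |v-w|^{-α} ⟨w⟩^{-m} dw ≤ C ⟨v⟩^{-α}. -/
open MeasureTheory Set Metric ENNReal

private lemma jb_sqrt (x : EuclideanSpace ℝ (Fin 3)) :
    ((1:ℝ) + ‖x‖ ^ 2) ^ ((1:ℝ)/2) = Real.sqrt (1 + ‖x‖ ^ 2) := by
  rw [Real.rpow_div_two_eq_sqrt _ (by positivity), Real.rpow_one]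

private lemma jb_one_le (x : EuclideanSpace ℝ (Fin 3)) :
    (1:ℝ) ≤ ((1:ℝ) + ‖x‖ ^ 2) ^ ((1:ℝ)/2) := by
  rw [jb_sqrt]
  exact Real.one_le_sqrt.mpr (by nlinarith [sq_nonneg ‖x‖])

private lemma jb_pos (x : EuclideanSpace ℝ (Fin 3)) :
    (0:ℝ) < ((1:ℝ) + ‖x‖ ^ 2) ^ ((1:ℝ)/2) :=
  lt_of_lt_of_le one_pos (jb_one_le x)

private lemma norm_le_jb (x : EuclideanSpace ℝ (Fin 3)) :
    ‖x‖ ≤ ((1:ℝ) + ‖x‖ ^ 2) ^ ((1:ℝ)/2) := by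
  rw [jb_sqrt]
  exact (Real.le_sqrt (norm_nonneg x) (by positivity)).mpr (by nlinarith)

private lemma jb_le_one_add (x : EuclideanSpace ℝ (Fin 3)) :
    ((1:ℝ) + ‖x‖ ^ 2) ^ ((1:ℝ)/2) ≤ 1 + ‖x‖ := by
  rw [jb_sqrt]; exact sqrt_one_add_norm_sq_le x

private lemma jb_ball_bound {v w : EuclideanSpace ℝ (Fin 3)}
    (h : ‖v - w‖ ≤ ((1:ℝ) + ‖v‖ ^ 2) ^ ((1:ℝ)/2) / 2) :
    ((1:ℝ) + ‖v‖ ^ 2) ^ ((1:ℝ)/2) ≤ 4 * ((1:ℝ) + ‖w‖ ^ 2) ^ ((1:ℝ)/2) := by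
  have h1 := jb_le_one_add v
  have h2 : ‖v‖ - ‖w‖ ≤ ‖v - w‖ := norm_sub_norm_le v w
  have h3 := norm_le_jb w
  have h4 := jb_one_le w
  linarith

private lemma riesz_ball_scaling (α : ℝ) {R : ℝ} (hR : 0 < R) :
    ∫⁻ u : EuclideanSpace ℝ (Fin 3) in ball 0 R, ENNReal.ofReal (‖u‖ ^ (-α)) =
      ENNReal.ofReal (R ^ ((3:ℝ) - α)) *
        ∫⁻ u : EuclideanSpace ℝ (Fin 3) in ball 0 1, ENNReal.ofReal (‖u‖ ^ (-α)) := by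
  set F : EuclideanSpace ℝ (Fin 3) → ℝ≥0∞ :=
    (ball (0 : EuclideanSpace ℝ (Fin 3)) R).indicator fun u => ENNReal.ofReal (‖u‖ ^ (-α)) with hF
  have hFmeas : Measurable F :=
    (Measurable.ennreal_ofReal ((measurable_norm).pow_const _)).indicator measurableSet_ball
  have hmap : Measure.map (R • · : EuclideanSpace ℝ (Fin 3) → _) volume
      = ENNReal.ofReal (|(R ^ Module.finrank ℝ (EuclideanSpace ℝ (Fin 3)))⁻¹|) • volume :=
    Measure.map_addHaar_smul volume (ne_of_gt hR)
  have key : ∫⁻ a : EuclideanSpace ℝ (Fin 3), F (R • a) =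
      ENNReal.ofReal ((R ^ 3)⁻¹) * ∫⁻ a, F a := by
    rw [← lintegral_map hFmeas (measurable_const_smul R), hmap]
    rw [lintegral_smul_measure]
    congr 2
    rw [abs_of_pos (by positivity)]
    norm_num [finrank_euclideanSpace]
  have keyL : ∀ a : EuclideanSpace ℝ (Fin 3), F (R • a) =
      ENNReal.ofReal (R ^ (-α)) *
        (ball (0 : EuclideanSpace ℝ (Fin 3)) 1).indicator
          (fun u => ENNReal.ofReal (‖u‖ ^ (-α))) a := by
    intro a
    have hna : ‖R • a‖ = R * ‖a‖ := by
      rw [norm_smul, Real.norm_eq_abs, abs_of_pos hR]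
    by_cases ha : a ∈ ball (0 : EuclideanSpace ℝ (Fin 3)) 1
    · have haR : R • a ∈ ball (0 : EuclideanSpace ℝ (Fin 3)) R := by
        rw [mem_ball_zero_iff] at ha ⊢
        rw [hna]
        calc R * ‖a‖ < R * 1 := by exact mul_lt_mul_of_pos_left ha hR
        _ = R := mul_one R
      rw [hF, indicator_of_mem haR, indicator_of_mem ha, hna,
        Real.mul_rpow hR.le (norm_nonneg a), ENNReal.ofReal_mul (by positivity)]
    · have haR : R • a ∉ ball (0 : EuclideanSpace ℝ (Fin 3)) R := by
        rw [mem_ball_zero_iff] at ha ⊢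
        rw [hna]
        intro hc
        exact ha (by nlinarith)
      rw [hF, indicator_of_notMem haR, indicator_of_notMem ha, mul_zero]
  have key2 : ENNReal.ofReal ((R ^ 3)⁻¹) * ∫⁻ a, F a =
      ENNReal.ofReal (R ^ (-α)) *
        ∫⁻ u : EuclideanSpace ℝ (Fin 3) in ball 0 1, ENNReal.ofReal (‖u‖ ^ (-α)) := by
    rw [← key]
    simp_rw [keyL]
    rw [lintegral_const_mul' _ _ ENNReal.ofReal_ne_top,
      lintegral_indicator measurableSet_ball _]
  have hrw : ∫⁻ u : EuclideanSpace ℝ (Fin 3) in ball 0 R, ENNReal.ofReal (‖u‖ ^ (-α))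
      = ∫⁻ a, F a := (lintegral_indicator measurableSet_ball _).symm
  rw [hrw]
  have hco : ENNReal.ofReal (R ^ 3) * ENNReal.ofReal ((R ^ 3)⁻¹) = 1 := by
    rw [← ENNReal.ofReal_mul (by positivity), mul_inv_cancel₀ (by positivity), ENNReal.ofReal_one]
  calc ∫⁻ a, F a = (ENNReal.ofReal (R ^ 3) * ENNReal.ofReal ((R ^ 3)⁻¹)) * ∫⁻ a, F a := by
        rw [hco, one_mul]
    _ = ENNReal.ofReal (R ^ 3) * (ENNReal.ofReal ((R ^ 3)⁻¹) * ∫⁻ a, F a) := by ring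
    _ = ENNReal.ofReal (R ^ 3) * (ENNReal.ofReal (R ^ (-α)) *
          ∫⁻ u : EuclideanSpace ℝ (Fin 3) in ball 0 1, ENNReal.ofReal (‖u‖ ^ (-α))) := by
        rw [key2]
    _ = ENNReal.ofReal (R ^ ((3:ℝ) - α)) *
          ∫⁻ u : EuclideanSpace ℝ (Fin 3) in ball 0 1, ENNReal.ofReal (‖u‖ ^ (-α)) := by
        rw [← mul_assoc, ← ENNReal.ofReal_mul (by positivity)]
        have h3a : R ^ (3:ℕ) * R ^ (-α) = R ^ ((3:ℝ) - α) := by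
          rw [← Real.rpow_natCast R 3, ← Real.rpow_add hR]
          norm_num [sub_eq_add_neg]
        rw [h3a]

private lemma riesz_unit_ball_lt_top {α : ℝ} (hα : α ∈ Ioo (0:ℝ) 3) :
    (∫⁻ u : EuclideanSpace ℝ (Fin 3) in ball 0 1, ENNReal.ofReal (‖u‖ ^ (-α))) < ⊤ := by
  obtain ⟨hα0, hα3⟩ := hα
  set μ1 := (volume : Measure (EuclideanSpace ℝ (Fin 3))).restrict (ball 0 1) with hμ1
  have hmeas : Measurable fun u : EuclideanSpace ℝ (Fin 3) => ‖u‖ ^ (-α) :=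
    measurable_norm.pow_const _
  have hnn : ∀ u : EuclideanSpace ℝ (Fin 3), 0 ≤ ‖u‖ ^ (-α) := fun u =>
    Real.rpow_nonneg (norm_nonneg u) _
  rw [show (∫⁻ u : EuclideanSpace ℝ (Fin 3) in ball 0 1, ENNReal.ofReal (‖u‖ ^ (-α)))
      = ∫⁻ u, ENNReal.ofReal (‖u‖ ^ (-α)) ∂μ1 from rfl,
    lintegral_eq_lintegral_meas_le μ1 (Filter.Eventually.of_forall hnn) hmeas.aemeasurable]
  set f : ℝ → ℝ≥0∞ := fun t => μ1 {a | t ≤ ‖a‖ ^ (-α)} with hf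
  have hBB : ∀ t, f t ≤ volume (ball (0 : EuclideanSpace ℝ (Fin 3)) 1) := fun t => by
    calc f t ≤ μ1 univ := measure_mono (subset_univ _)
      _ = volume (ball (0 : EuclideanSpace ℝ (Fin 3)) 1) := by
          rw [hμ1, Measure.restrict_apply_univ]
  have htail : ∀ t ∈ Ioi (1:ℝ),
      f t ≤ ENNReal.ofReal (t ^ (-(α⁻¹ * 3))) *
        volume (ball (0 : EuclideanSpace ℝ (Fin 3)) 1) := by
    intro t ht
    have ht1 : (1:ℝ) < t := ht
    have ht0 : (0:ℝ) < t := lt_trans one_pos ht1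
    have hsub : {a : EuclideanSpace ℝ (Fin 3) | t ≤ ‖a‖ ^ (-α)} ⊆
        closedBall 0 (t ^ (-α)⁻¹) := by
      intro a ha
      simp only [mem_setOf_eq] at ha
      rw [mem_closedBall_zero_iff]
      rcases eq_or_ne a 0 with rfl | ha0
      · exfalso
        rw [norm_zero, Real.zero_rpow (neg_ne_zero.mpr (ne_of_gt hα0))] at ha
        linarith
      · have hna : 0 < ‖a‖ := norm_pos_iff.mpr ha0
        exact (Real.le_rpow_inv_iff_of_neg hna ht0 (neg_lt_zero.mpr hα0)).mpr ha
    have hc : f t ≤ volume (closedBall (0 : EuclideanSpace ℝ (Fin 3)) (t ^ (-α)⁻¹)) :=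
      le_trans (Measure.restrict_le_self _) (measure_mono hsub)
    refine hc.trans (le_of_eq ?_)
    rw [Measure.addHaar_closedBall _ _ (Real.rpow_nonneg ht0.le _)]
    congr 2
    rw [← Real.rpow_natCast (t ^ (-α)⁻¹) _, ← Real.rpow_mul ht0.le]
    congr 1
    rw [finrank_euclideanSpace, inv_neg]
    norm_num
  calc ∫⁻ t in Ioi 0, f t ≤ ∫⁻ t in Ioc 0 1 ∪ Ioi 1, f t :=
        lintegral_mono_set Ioi_subset_Ioc_union_Ioi
    _ ≤ (∫⁻ t in Ioc 0 1, f t) + ∫⁻ t in Ioi 1, f t := lintegral_union_le _ _ _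
    _ < ⊤ := by
        refine ENNReal.add_lt_top.2 ⟨?_, ?_⟩
        · calc (∫⁻ t in Ioc 0 1, f t)
              ≤ ∫⁻ _ in Ioc (0:ℝ) 1, volume (ball (0 : EuclideanSpace ℝ (Fin 3)) 1) :=
                lintegral_mono fun t => hBB t
            _ = volume (ball (0 : EuclideanSpace ℝ (Fin 3)) 1) * volume (Ioc (0:ℝ) 1) :=
                setLIntegral_const _ _
            _ < ⊤ := by
                refine ENNReal.mul_lt_top measure_ball_lt_top ?_
                rw [Real.volume_Ioc]
                exact ENNReal.ofReal_lt_top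
        · calc (∫⁻ t in Ioi 1, f t)
              ≤ ∫⁻ t in Ioi (1:ℝ), ENNReal.ofReal (t ^ (-(α⁻¹ * 3))) *
                  volume (ball (0 : EuclideanSpace ℝ (Fin 3)) 1) :=
                setLIntegral_mono' measurableSet_Ioi htail
            _ = (∫⁻ t in Ioi (1:ℝ), ENNReal.ofReal (t ^ (-(α⁻¹ * 3)))) *
                  volume (ball (0 : EuclideanSpace ℝ (Fin 3)) 1) := by
                rw [lintegral_mul_const' _ _ measure_ball_lt_top.ne]
            _ < ⊤ := by
                refine ENNReal.mul_lt_top ?_ measure_ball_lt_top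
                refine IntegrableOn.setLIntegral_lt_top ?_
                refine integrableOn_Ioi_rpow_of_lt ?_ one_pos
                have : (1:ℝ) < α⁻¹ * 3 := by
                  rw [inv_mul_eq_div, lt_div_iff₀ hα0]
                  linarith
                linarith

private lemma jb_lintegral_lt_top {m : ℝ} (hm : 3 < m) :
    (∫⁻ w : EuclideanSpace ℝ (Fin 3),
      ENNReal.ofReal ((((1:ℝ) + ‖w‖ ^ 2) ^ ((1:ℝ)/2)) ^ (-m))) < ⊤ := by
  have hrw : ∀ w : EuclideanSpace ℝ (Fin 3),
      (((1:ℝ) + ‖w‖ ^ 2) ^ ((1:ℝ)/2)) ^ (-m) = ((1:ℝ) + ‖w‖ ^ 2) ^ (-m / 2) := by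
    intro w
    rw [← Real.rpow_mul (by positivity)]
    norm_num
    ring_nf
  simp_rw [hrw]
  have hint : Integrable (fun w : EuclideanSpace ℝ (Fin 3) =>
      ((1:ℝ) + ‖w‖ ^ 2) ^ (-m / 2)) volume := by
    apply integrable_rpow_neg_one_add_norm_sq
    rw [finrank_euclideanSpace]
    norm_num
    exact hm
  have := hint.hasFiniteIntegral
  rwa [hasFiniteIntegral_iff_ofReal (Filter.Eventually.of_forall fun w => by positivity)] at this

/-- Weighted convolution estimate for the Riesz kernel, case `m > 3`:
`∫ |v-w|^{-α} ⟨w⟩^{-m} dw ≲ ⟨v⟩^{-α}`. -/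
theorem riesz_convolution_high (α m : ℝ) (hα : α ∈ Ioo (0:ℝ) 3) (hm : 3 < m) :
    ∃ C > 0, ∀ v : EuclideanSpace ℝ (Fin 3),
      (∫ w : EuclideanSpace ℝ (Fin 3),
          ‖v - w‖ ^ (-α) * ((1 + ‖w‖ ^ 2) ^ ((1:ℝ)/2)) ^ (-m))
        ≤ C * ((1 + ‖v‖ ^ 2) ^ ((1:ℝ)/2)) ^ (-α) := by
  obtain ⟨hα0, hα3⟩ := hα
  have hm0 : 0 < m := by linarith
  set K1 := ∫⁻ u : EuclideanSpace ℝ (Fin 3) in ball 0 1, ENNReal.ofReal (‖u‖ ^ (-α)) with hK1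
  set M := ∫⁻ w : EuclideanSpace ℝ (Fin 3),
      ENNReal.ofReal ((((1:ℝ) + ‖w‖ ^ 2) ^ ((1:ℝ)/2)) ^ (-m)) with hMdef
  set Ctop : ℝ≥0∞ := K1 * ENNReal.ofReal ((2:ℝ) ^ (α - 3) * (4:ℝ) ^ m)
      + M * ENNReal.ofReal ((2:ℝ) ^ α) with hCtopdef
  have hK1top : K1 < ⊤ := riesz_unit_ball_lt_top ⟨hα0, hα3⟩
  have hMtop : M < ⊤ := jb_lintegral_lt_top hm
  have hCtop : Ctop < ⊤ :=
    ENNReal.add_lt_top.2 ⟨ENNReal.mul_lt_top hK1top ENNReal.ofReal_lt_top,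
      ENNReal.mul_lt_top hMtop ENNReal.ofReal_lt_top⟩
  refine ⟨Ctop.toReal + 1, by positivity, fun v => ?_⟩
  set jv : ℝ := ((1:ℝ) + ‖v‖ ^ 2) ^ ((1:ℝ)/2) with hjvdef
  have hjv1 : 1 ≤ jv := jb_one_le v
  have hjv0 : 0 < jv := jb_pos v
  set R : ℝ := jv / 2 with hRdef
  have hR : 0 < R := by positivity
  set B : Set (EuclideanSpace ℝ (Fin 3)) := ball v R with hBdef
  -- Pass to the lower Lebesgue integral
  have hgmeas : Measurable fun w : EuclideanSpace ℝ (Fin 3) =>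
      ‖v - w‖ ^ (-α) * (((1:ℝ) + ‖w‖ ^ 2) ^ ((1:ℝ)/2)) ^ (-m) := by
    fun_prop
  have hgnn : ∀ w : EuclideanSpace ℝ (Fin 3),
      0 ≤ ‖v - w‖ ^ (-α) * (((1:ℝ) + ‖w‖ ^ 2) ^ ((1:ℝ)/2)) ^ (-m) := fun w => by positivity
  rw [integral_eq_lintegral_of_nonneg_ae (Filter.Eventually.of_forall hgnn)
    hgmeas.aestronglyMeasurable]
  -- Core bound for the lower Lebesgue integral
  have hsuff : (∫⁻ w : EuclideanSpace ℝ (Fin 3),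
      ENNReal.ofReal (‖v - w‖ ^ (-α) * (((1:ℝ) + ‖w‖ ^ 2) ^ ((1:ℝ)/2)) ^ (-m)))
      ≤ Ctop * ENNReal.ofReal (jv ^ (-α)) := by
    -- translation invariance for the ball term
    have htrans : (∫⁻ w : EuclideanSpace ℝ (Fin 3) in B, ENNReal.ofReal (‖v - w‖ ^ (-α)))
        = ∫⁻ u : EuclideanSpace ℝ (Fin 3) in ball 0 R, ENNReal.ofReal (‖u‖ ^ (-α)) := by
      set F : EuclideanSpace ℝ (Fin 3) → ℝ≥0∞ :=
        (ball (0 : EuclideanSpace ℝ (Fin 3)) R).indicator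
          fun u => ENNReal.ofReal (‖u‖ ^ (-α)) with hFdef
      have hFmeas : Measurable F :=
        (Measurable.ennreal_ofReal (measurable_norm.pow_const _)).indicator measurableSet_ball
      have h1 : ∀ w : EuclideanSpace ℝ (Fin 3),
          B.indicator (fun w => ENNReal.ofReal (‖v - w‖ ^ (-α))) w = F (v - w) := by
        intro w
        have hmem : w ∈ B ↔ v - w ∈ ball (0 : EuclideanSpace ℝ (Fin 3)) R := by
          rw [hBdef, mem_ball, mem_ball_zero_iff, dist_eq_norm, norm_sub_rev]
        by_cases hw : w ∈ B
        · rw [indicator_of_mem hw, hFdef, indicator_of_mem (hmem.mp hw)]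
        · rw [indicator_of_notMem hw, hFdef,
            indicator_of_notMem (fun hc => hw (hmem.mpr hc))]
      rw [← lintegral_indicator (s := B) measurableSet_ball]
      simp_rw [h1]
      rw [(Measure.measurePreserving_sub_left volume v).lintegral_comp hFmeas, hFdef,
        lintegral_indicator measurableSet_ball]
    -- the key real inequality for the ball term
    have hreal1 : R ^ ((3:ℝ) - α) * ((4:ℝ) ^ m * jv ^ (-m))
        ≤ ((2:ℝ) ^ (α - 3) * (4:ℝ) ^ m) * jv ^ (-α) := by
      have h1 : R ^ ((3:ℝ) - α) = jv ^ ((3:ℝ) - α) * (2:ℝ) ^ (α - 3) := by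
        rw [hRdef, Real.div_rpow hjv0.le (by norm_num), div_eq_mul_inv,
          ← Real.rpow_neg (by norm_num : (0:ℝ) ≤ 2), neg_sub]
      have h2 : jv ^ ((3:ℝ) - α) * jv ^ (-m) = jv ^ ((3:ℝ) - α + -m) :=
        (Real.rpow_add hjv0 _ _).symm
      have h3 : jv ^ ((3:ℝ) - α + -m) ≤ jv ^ (-α) :=
        Real.rpow_le_rpow_of_exponent_le hjv1 (by linarith)
      calc R ^ ((3:ℝ) - α) * ((4:ℝ) ^ m * jv ^ (-m))
          = ((2:ℝ) ^ (α - 3) * (4:ℝ) ^ m) * (jv ^ ((3:ℝ) - α) * jv ^ (-m)) := by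
            rw [h1]; ring
        _ = ((2:ℝ) ^ (α - 3) * (4:ℝ) ^ m) * jv ^ ((3:ℝ) - α + -m) := by rw [h2]
        _ ≤ ((2:ℝ) ^ (α - 3) * (4:ℝ) ^ m) * jv ^ (-α) :=
            mul_le_mul_of_nonneg_left h3 (by positivity)
    -- the ball term
    have hterm1 : (∫⁻ w : EuclideanSpace ℝ (Fin 3) in B,
        ENNReal.ofReal (‖v - w‖ ^ (-α) * (((1:ℝ) + ‖w‖ ^ 2) ^ ((1:ℝ)/2)) ^ (-m)))
        ≤ K1 * (ENNReal.ofReal ((2:ℝ) ^ (α - 3) * (4:ℝ) ^ m) * ENNReal.ofReal (jv ^ (-α))) := by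
      have hpt : ∀ w ∈ B, ENNReal.ofReal (‖v - w‖ ^ (-α) *
          (((1:ℝ) + ‖w‖ ^ 2) ^ ((1:ℝ)/2)) ^ (-m))
          ≤ ENNReal.ofReal (‖v - w‖ ^ (-α)) * ENNReal.ofReal ((4:ℝ) ^ m * jv ^ (-m)) := by
        intro w hw
        rw [← ENNReal.ofReal_mul (by positivity)]
        apply ENNReal.ofReal_le_ofReal
        have hvw : ‖v - w‖ ≤ R := by
          rw [hBdef, mem_ball, dist_eq_norm] at hw
          rw [norm_sub_rev]
          exact le_of_lt hw
        have h4 : jv ≤ 4 * (((1:ℝ) + ‖w‖ ^ 2) ^ ((1:ℝ)/2)) := jb_ball_bound hvw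
        have hjw4 : jv / 4 ≤ ((1:ℝ) + ‖w‖ ^ 2) ^ ((1:ℝ)/2) := by linarith
        have h5 : (((1:ℝ) + ‖w‖ ^ 2) ^ ((1:ℝ)/2)) ^ (-m) ≤ (jv / 4) ^ (-m) :=
          Real.rpow_le_rpow_of_nonpos (by positivity) hjw4 (by linarith)
        have heq : (jv / 4) ^ (-m) = (4:ℝ) ^ m * jv ^ (-m) := by
          rw [Real.div_rpow hjv0.le (by norm_num), div_eq_mul_inv,
            Real.rpow_neg (by norm_num : (0:ℝ) ≤ 4), inv_inv, mul_comm]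
        have h6 : (((1:ℝ) + ‖w‖ ^ 2) ^ ((1:ℝ)/2)) ^ (-m) ≤ (4:ℝ) ^ m * jv ^ (-m) :=
          h5.trans_eq heq
        exact mul_le_mul_of_nonneg_left h6 (by positivity)
      calc (∫⁻ w : EuclideanSpace ℝ (Fin 3) in B,
            ENNReal.ofReal (‖v - w‖ ^ (-α) * (((1:ℝ) + ‖w‖ ^ 2) ^ ((1:ℝ)/2)) ^ (-m)))
          ≤ ∫⁻ w : EuclideanSpace ℝ (Fin 3) in B,
              ENNReal.ofReal (‖v - w‖ ^ (-α)) * ENNReal.ofReal ((4:ℝ) ^ m * jv ^ (-m)) :=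
            setLIntegral_mono' measurableSet_ball hpt
        _ = (∫⁻ w : EuclideanSpace ℝ (Fin 3) in B, ENNReal.ofReal (‖v - w‖ ^ (-α)))
              * ENNReal.ofReal ((4:ℝ) ^ m * jv ^ (-m)) :=
            lintegral_mul_const' _ _ ENNReal.ofReal_ne_top
        _ = (ENNReal.ofReal (R ^ ((3:ℝ) - α)) * K1) * ENNReal.ofReal ((4:ℝ) ^ m * jv ^ (-m)) := by
            rw [htrans, riesz_ball_scaling α hR]
        _ = K1 * (ENNReal.ofReal (R ^ ((3:ℝ) - α)) * ENNReal.ofReal ((4:ℝ) ^ m * jv ^ (-m))) := by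
            ring
        _ = K1 * ENNReal.ofReal (R ^ ((3:ℝ) - α) * ((4:ℝ) ^ m * jv ^ (-m))) := by
            rw [← ENNReal.ofReal_mul (by positivity)]
        _ ≤ K1 * ENNReal.ofReal (((2:ℝ) ^ (α - 3) * (4:ℝ) ^ m) * jv ^ (-α)) :=
            mul_le_mul_right (ENNReal.ofReal_le_ofReal hreal1) _
        _ = K1 * (ENNReal.ofReal ((2:ℝ) ^ (α - 3) * (4:ℝ) ^ m) * ENNReal.ofReal (jv ^ (-α))) := by
            rw [ENNReal.ofReal_mul (by positivity)]
    -- the complement term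
    have hterm2 : (∫⁻ w : EuclideanSpace ℝ (Fin 3) in Bᶜ,
        ENNReal.ofReal (‖v - w‖ ^ (-α) * (((1:ℝ) + ‖w‖ ^ 2) ^ ((1:ℝ)/2)) ^ (-m)))
        ≤ M * (ENNReal.ofReal ((2:ℝ) ^ α) * ENNReal.ofReal (jv ^ (-α))) := by
      have hpt : ∀ w ∈ Bᶜ, ENNReal.ofReal (‖v - w‖ ^ (-α) *
          (((1:ℝ) + ‖w‖ ^ 2) ^ ((1:ℝ)/2)) ^ (-m))
          ≤ ENNReal.ofReal ((2:ℝ) ^ α * jv ^ (-α))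
              * ENNReal.ofReal ((((1:ℝ) + ‖w‖ ^ 2) ^ ((1:ℝ)/2)) ^ (-m)) := by
        intro w hw
        rw [← ENNReal.ofReal_mul (by positivity)]
        apply ENNReal.ofReal_le_ofReal
        have hdist : R ≤ ‖v - w‖ := by
          rw [hBdef, mem_compl_iff, mem_ball, not_lt, dist_eq_norm] at hw
          rw [norm_sub_rev]
          exact hw
        have h1 : ‖v - w‖ ^ (-α) ≤ R ^ (-α) :=
          Real.rpow_le_rpow_of_nonpos hR hdist (by linarith)
        have h2 : R ^ (-α) = (2:ℝ) ^ α * jv ^ (-α) := by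
          rw [hRdef, Real.div_rpow hjv0.le (by norm_num), div_eq_mul_inv,
            Real.rpow_neg (by norm_num : (0:ℝ) ≤ 2), inv_inv, mul_comm]
        exact mul_le_mul_of_nonneg_right (h1.trans_eq h2) (by positivity)
      calc (∫⁻ w : EuclideanSpace ℝ (Fin 3) in Bᶜ,
            ENNReal.ofReal (‖v - w‖ ^ (-α) * (((1:ℝ) + ‖w‖ ^ 2) ^ ((1:ℝ)/2)) ^ (-m)))
          ≤ ∫⁻ w : EuclideanSpace ℝ (Fin 3) in Bᶜ,
              ENNReal.ofReal ((2:ℝ) ^ α * jv ^ (-α))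
                * ENNReal.ofReal ((((1:ℝ) + ‖w‖ ^ 2) ^ ((1:ℝ)/2)) ^ (-m)) :=
            setLIntegral_mono' measurableSet_ball.compl hpt
        _ ≤ ∫⁻ w : EuclideanSpace ℝ (Fin 3),
              ENNReal.ofReal ((2:ℝ) ^ α * jv ^ (-α))
                * ENNReal.ofReal ((((1:ℝ) + ‖w‖ ^ 2) ^ ((1:ℝ)/2)) ^ (-m)) :=
            setLIntegral_le_lintegral _ _
        _ = ENNReal.ofReal ((2:ℝ) ^ α * jv ^ (-α)) * M :=
            lintegral_const_mul' _ _ ENNReal.ofReal_ne_top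
        _ = M * ENNReal.ofReal ((2:ℝ) ^ α * jv ^ (-α)) := mul_comm _ _
        _ = M * (ENNReal.ofReal ((2:ℝ) ^ α) * ENNReal.ofReal (jv ^ (-α))) := by
            rw [ENNReal.ofReal_mul (by positivity)]
    calc (∫⁻ w : EuclideanSpace ℝ (Fin 3),
          ENNReal.ofReal (‖v - w‖ ^ (-α) * (((1:ℝ) + ‖w‖ ^ 2) ^ ((1:ℝ)/2)) ^ (-m)))
        = (∫⁻ w : EuclideanSpace ℝ (Fin 3) in B,
            ENNReal.ofReal (‖v - w‖ ^ (-α) * (((1:ℝ) + ‖w‖ ^ 2) ^ ((1:ℝ)/2)) ^ (-m)))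
          + ∫⁻ w : EuclideanSpace ℝ (Fin 3) in Bᶜ,
            ENNReal.ofReal (‖v - w‖ ^ (-α) * (((1:ℝ) + ‖w‖ ^ 2) ^ ((1:ℝ)/2)) ^ (-m)) :=
          (lintegral_add_compl _ measurableSet_ball).symm
      _ ≤ K1 * (ENNReal.ofReal ((2:ℝ) ^ (α - 3) * (4:ℝ) ^ m) * ENNReal.ofReal (jv ^ (-α)))
            + M * (ENNReal.ofReal ((2:ℝ) ^ α) * ENNReal.ofReal (jv ^ (-α))) :=
          add_le_add hterm1 hterm2
      _ = Ctop * ENNReal.ofReal (jv ^ (-α)) := by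
          rw [hCtopdef]; ring
  have hfin : Ctop * ENNReal.ofReal (jv ^ (-α)) ≠ ⊤ :=
    ENNReal.mul_ne_top hCtop.ne ENNReal.ofReal_ne_top
  calc (∫⁻ w : EuclideanSpace ℝ (Fin 3),
        ENNReal.ofReal (‖v - w‖ ^ (-α) * (((1:ℝ) + ‖w‖ ^ 2) ^ ((1:ℝ)/2)) ^ (-m))).toReal
      ≤ (Ctop * ENNReal.ofReal (jv ^ (-α))).toReal := ENNReal.toReal_mono hfin hsuff
    _ = Ctop.toReal * (jv ^ (-α)) := by
        rw [ENNReal.toReal_mul, ENNReal.toReal_ofReal (by positivity)]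
    _ ≤ (Ctop.toReal + 1) * (jv ^ (-α)) := by
        have h1 : (0:ℝ) ≤ jv ^ (-α) := by positivity
        nlinarith [ENNReal.toReal_nonneg (a := Ctop)]
end

section
/- Fix α ∈ (0,3). There is a constant C = C(α) such that for all v ∈ ℝ³, ∫_{ℝ³} |v-w|^{-α} ⟨w⟩^{-3} dw ≤ C ⟨v⟩^{-α} log(1 + ⟨v⟩). -/
open MeasureTheory Set

open Metric



local notation "E3" => EuclideanSpace ℝ (Fin 3)

private lemma radial_integrable {f : ℝ → ℝ}
    (h : IntegrableOn (fun r => r ^ 2 * f r) (Ioi (0:ℝ))) :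
    Integrable (fun x : E3 => f ‖x‖) := by
  have hms : MeasurableSet ({(0:E3)}ᶜ) := (measurableSet_singleton _).compl
  have h2 : Integrable (fun r : Ioi (0:ℝ) => f r) (Measure.volumeIoiPow 2) := by
    rw [Measure.volumeIoiPow, integrable_withDensity_iff (by fun_prop)
      (Filter.Eventually.of_forall fun _ => ENNReal.ofReal_lt_top)]
    have heq : (fun x : Ioi (0:ℝ) => f x * (ENNReal.ofReal ((x:ℝ) ^ 2)).toReal)
        = (fun r : ℝ => f r * r ^ 2) ∘ (Subtype.val : Ioi (0:ℝ) → ℝ) := by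
      funext x
      simp [ENNReal.toReal_ofReal (sq_nonneg (x:ℝ))]
    rw [heq, ← (MeasurableEmbedding.subtype_coe measurableSet_Ioi).integrable_map_iff,
      map_comap_subtype_coe measurableSet_Ioi]
    exact h.congr_fun (fun r _ => mul_comm _ _) measurableSet_Ioi
  have h3 : Integrable (fun p : (sphere (0:E3) 1) × (Ioi (0:ℝ)) => f p.2)
      ((volume : Measure E3).toSphere.prod
        (Measure.volumeIoiPow (Module.finrank ℝ E3 - 1))) := by
    have hd : Module.finrank ℝ E3 - 1 = 2 := by
      simp [finrank_euclideanSpace_fin]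
    rw [hd]
    simpa using (integrable_const (1:ℝ)).smul_prod h2
  have h4 : Integrable (fun x : E3 => f ‖x‖) ((volume : Measure E3).restrict ({(0:E3)}ᶜ)) := by
    rw [← map_comap_subtype_coe hms,
      (MeasurableEmbedding.subtype_coe hms).integrable_map_iff]
    convert ((Measure.measurePreserving_homeomorphUnitSphereProd
      (volume : Measure E3)).integrable_comp_emb
      (Homeomorph.measurableEmbedding _)).mpr h3 using 1
    funext x
    simp [homeomorphUnitSphereProd]
  rwa [restrict_compl_singleton] at h4

private lemma radial_integral (f : ℝ → ℝ) :
    ∫ x : E3, f ‖x‖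
      = (3 * ((volume : Measure E3) (ball (0:E3) 1)).toReal) * ∫ r in Ioi (0:ℝ), r ^ 2 * f r := by
  rw [integral_fun_norm_addHaar (volume : Measure E3) f]
  have hd : Module.finrank ℝ E3 = 3 := finrank_euclideanSpace_fin
  rw [hd]
  simp only [smul_eq_mul, nsmul_eq_mul, show (3:ℕ) - 1 = 2 from rfl]
  push_cast
  simp only [measureReal_def]
  ring



private lemma key1 {α : ℝ} (h0 : 0 < α) (h3 : α < 3) {R : ℝ} (hR : 0 < R) :
    ∫ r in Ioi (0:ℝ), r ^ 2 * (Iio R).indicator (fun r => r ^ (-α)) r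
      = R ^ (3 - α) / (3 - α) := by
  have h1 : (fun r : ℝ => r ^ 2 * (Iio R).indicator (fun r => r ^ (-α)) r)
      = (Iio R).indicator (fun r : ℝ => r ^ 2 * r ^ (-α)) := by
    funext r
    exact (Set.indicator_mul_right _ (fun r : ℝ => r ^ 2) _).symm
  rw [h1, setIntegral_indicator measurableSet_Iio, Ioi_inter_Iio]
  rw [setIntegral_congr_fun measurableSet_Ioo
    (g := fun r : ℝ => r ^ ((2:ℝ) - α))
    (fun r hr => by
      show r ^ 2 * r ^ (-α) = r ^ ((2:ℝ) - α)
      rw [← Real.rpow_natCast r 2, ← Real.rpow_add hr.1]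
      norm_num
      ring_nf)]
  rw [← integral_Ioc_eq_integral_Ioo, ← intervalIntegral.integral_of_le hR.le,
    integral_rpow (Or.inl (by linarith))]
  rw [Real.zero_rpow (by intro hc; linarith : (2:ℝ) - α + 1 ≠ 0), sub_zero,
    show (2:ℝ) - α + 1 = 3 - α by ring]

private lemma key3 {α : ℝ} (h0 : 0 < α) {N : ℝ} (hN : 1 ≤ N) :
    ∫ r in Ioi (0:ℝ), r ^ 2 * (Ici (2*N)).indicator (fun r => r ^ (-(3+α))) r
      = (2*N) ^ (-α) / α := by
  have h1 : (fun r : ℝ => r ^ 2 * (Ici (2*N)).indicator (fun r => r ^ (-(3+α))) r)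
      = (Ici (2*N)).indicator (fun r : ℝ => r ^ 2 * r ^ (-(3+α))) := by
    funext r
    exact (Set.indicator_mul_right _ (fun r : ℝ => r ^ 2) _).symm
  have hsub : Ioi (0:ℝ) ∩ Ici (2*N) = Ici (2*N) :=
    inter_eq_self_of_subset_right (fun x hx => lt_of_lt_of_le (by linarith : (0:ℝ) < 2*N) hx)
  rw [h1, setIntegral_indicator measurableSet_Ici, hsub, integral_Ici_eq_integral_Ioi]
  rw [setIntegral_congr_fun measurableSet_Ioi
    (g := fun r : ℝ => r ^ (-(1+α)))
    (fun r hr => by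
      have hr0 : (0:ℝ) < r := lt_trans (by linarith) hr
      show r ^ 2 * r ^ (-(3+α)) = r ^ (-(1+α))
      rw [← Real.rpow_natCast r 2, ← Real.rpow_add hr0]
      norm_num
      ring_nf)]
  rw [integral_Ioi_rpow_of_lt (by linarith) (by linarith : (0:ℝ) < 2*N)]
  rw [show -(1+α) + 1 = -α by ring, neg_div_neg_eq]

private lemma key2 {N : ℝ} (hN : 1 ≤ N) :
    ∫ r in Ioi (0:ℝ), r ^ 2 * (Iio (2*N)).indicator
        (fun r => Real.sqrt (1 + r ^ 2) ^ (-(3:ℝ))) r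
      ≤ 4 * Real.log (1 + N) := by
  have hN0 : (0:ℝ) < N := by linarith
  have h1 : (fun r : ℝ => r ^ 2 * (Iio (2*N)).indicator
        (fun r => Real.sqrt (1 + r ^ 2) ^ (-(3:ℝ))) r)
      = (Iio (2*N)).indicator (fun r : ℝ => r ^ 2 * Real.sqrt (1 + r ^ 2) ^ (-(3:ℝ))) := by
    funext r
    exact (Set.indicator_mul_right _ (fun r : ℝ => r ^ 2) _).symm
  rw [h1, setIntegral_indicator measurableSet_Iio, Ioi_inter_Iio]
  have hcont : Continuous fun r : ℝ => r ^ 2 * Real.sqrt (1 + r ^ 2) ^ (-(3:ℝ)) := by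
    apply (continuous_pow 2).mul
    apply Continuous.rpow_const
    · exact (continuous_const.add (continuous_pow 2)).sqrt
    · intro x
      left
      positivity
  have hg : IntegrableOn (fun r : ℝ => 2 * (1 + r)⁻¹) (Ioo 0 (2*N)) := by
    apply (ContinuousOn.integrableOn_compact (isCompact_Icc (a := (0:ℝ)) (b := 2*N))
      ?_).mono_set Ioo_subset_Icc_self
    apply continuousOn_const.mul
    apply ContinuousOn.inv₀ (continuousOn_const.add continuousOn_id)
    intro x hx
    exact (by linarith [hx.1] : (0:ℝ) < 1 + x).ne'
  have hmono : ∫ r in Ioo (0:ℝ) (2*N), r ^ 2 * Real.sqrt (1 + r ^ 2) ^ (-(3:ℝ))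
      ≤ ∫ r in Ioo (0:ℝ) (2*N), 2 * (1 + r)⁻¹ := by
    apply setIntegral_mono_on
      ((hcont.integrableOn_Icc (a := 0) (b := 2*N)).mono_set Ioo_subset_Icc_self) hg
      measurableSet_Ioo
    intro r hr
    have hr0 : 0 < r := hr.1
    have hs0 : 0 < Real.sqrt (1 + r ^ 2) := Real.sqrt_pos.mpr (by positivity)
    have hs1 : 1 ≤ Real.sqrt (1 + r ^ 2) := by
      have := Real.sqrt_le_sqrt (show (1:ℝ) ≤ 1 + r ^ 2 by nlinarith [sq_nonneg r])
      simpa using this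
    have hsr : r ≤ Real.sqrt (1 + r ^ 2) :=
      calc r = Real.sqrt (r ^ 2) := (Real.sqrt_sq hr0.le).symm
        _ ≤ _ := Real.sqrt_le_sqrt (by linarith)
    have hsq : Real.sqrt (1 + r ^ 2) ^ 2 = 1 + r ^ 2 := Real.sq_sqrt (by positivity)
    set s := Real.sqrt (1 + r ^ 2) with hs
    have key : r ^ 2 * (1 + r) ≤ 2 * s ^ 3 := by
      have k1 : r ^ 2 * r ≤ s ^ 2 * s := by
        apply mul_le_mul (by nlinarith) hsr hr0.le (by positivity)
      have k2 : r ^ 2 ≤ s ^ 2 * s := by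
        have h' : s ^ 2 ≤ s ^ 2 * s := le_mul_of_one_le_right (by positivity) hs1
        nlinarith
      nlinarith
    have hrw3 : s ^ (-(3:ℝ)) = (s ^ 3)⁻¹ := by
      rw [Real.rpow_neg hs0.le, show ((3:ℝ)) = ((3:ℕ):ℝ) by norm_num, Real.rpow_natCast]
    rw [hrw3]
    simp only [← div_eq_mul_inv]
    rw [div_le_div_iff₀ (by positivity) (by positivity)]
    linarith [key]
  refine hmono.trans ?_
  have hcalc : ∫ r in Ioo (0:ℝ) (2*N), 2 * (1 + r)⁻¹ = 2 * Real.log (1 + 2*N) := by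
    rw [← integral_Ioc_eq_integral_Ioo,
      ← intervalIntegral.integral_of_le (by linarith : (0:ℝ) ≤ 2*N),
      intervalIntegral.integral_const_mul]
    have hci := intervalIntegral.integral_comp_add_left (a := (0:ℝ)) (b := 2*N)
      (fun y : ℝ => y⁻¹) 1
    rw [hci, integral_inv (by
      intro hc
      rw [Set.uIcc_of_le (by linarith : (1:ℝ) + 0 ≤ 1 + 2*N)] at hc
      linarith [hc.1])]
    rw [add_zero, div_one]
  rw [hcalc]
  have hlog : Real.log (1 + 2*N) ≤ 2 * Real.log (1 + N) := by
    calc Real.log (1 + 2*N) ≤ Real.log ((1 + N) ^ 2) :=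
          Real.log_le_log (by linarith) (by nlinarith)
      _ = 2 * Real.log (1 + N) := by
          rw [Real.log_pow]
          norm_num
  linarith



private lemma int1 {α : ℝ} (h3 : α < 3) {R : ℝ} (hR : 0 < R) :
    IntegrableOn (fun r : ℝ => r ^ 2 * (Iio R).indicator (fun r => r ^ (-α)) r)
      (Ioi (0:ℝ)) := by
  have h1 : (fun r : ℝ => r ^ 2 * (Iio R).indicator (fun r => r ^ (-α)) r)
      = (Iio R).indicator (fun r : ℝ => r ^ 2 * r ^ (-α)) := by
    funext r
    exact (Set.indicator_mul_right _ (fun r : ℝ => r ^ 2) _).symm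
  rw [h1]
  have base : IntegrableOn (fun r : ℝ => r ^ 2 * r ^ (-α)) (Ioo 0 R) := by
    have hii : IntervalIntegrable (fun x : ℝ => x ^ ((2:ℝ) - α)) volume 0 R :=
      intervalIntegral.intervalIntegrable_rpow' (by linarith)
    rw [intervalIntegrable_iff_integrableOn_Ioc_of_le hR.le] at hii
    refine (hii.mono_set Ioo_subset_Ioc_self).congr_fun (fun r hr => ?_) measurableSet_Ioo
    show r ^ ((2:ℝ) - α) = r ^ 2 * r ^ (-α)
    rw [← Real.rpow_natCast r 2, ← Real.rpow_add hr.1]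
    norm_num
    ring_nf
  have : Integrable (fun r : ℝ => r ^ 2 * r ^ (-α))
      ((volume.restrict (Ioi (0:ℝ))).restrict (Iio R)) := by
    rw [Measure.restrict_restrict measurableSet_Iio, Set.Iio_inter_Ioi]
    exact base
  exact (integrable_indicator_iff measurableSet_Iio).mpr this

private lemma int2 {N : ℝ} (hN : 1 ≤ N) :
    IntegrableOn (fun r : ℝ => r ^ 2 * (Iio (2*N)).indicator
      (fun r => Real.sqrt (1 + r ^ 2) ^ (-(3:ℝ))) r) (Ioi (0:ℝ)) := by
  have h1 : (fun r : ℝ => r ^ 2 * (Iio (2*N)).indicator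
        (fun r => Real.sqrt (1 + r ^ 2) ^ (-(3:ℝ))) r)
      = (Iio (2*N)).indicator (fun r : ℝ => r ^ 2 * Real.sqrt (1 + r ^ 2) ^ (-(3:ℝ))) := by
    funext r
    exact (Set.indicator_mul_right _ (fun r : ℝ => r ^ 2) _).symm
  rw [h1]
  have hcont : Continuous fun r : ℝ => r ^ 2 * Real.sqrt (1 + r ^ 2) ^ (-(3:ℝ)) := by
    apply (continuous_pow 2).mul
    apply Continuous.rpow_const
    · exact (continuous_const.add (continuous_pow 2)).sqrt
    · intro x
      left
      positivity
  have : Integrable (fun r : ℝ => r ^ 2 * Real.sqrt (1 + r ^ 2) ^ (-(3:ℝ)))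
      ((volume.restrict (Ioi (0:ℝ))).restrict (Iio (2*N))) := by
    rw [Measure.restrict_restrict measurableSet_Iio, Set.Iio_inter_Ioi]
    exact (hcont.integrableOn_Icc (a := 0) (b := 2*N)).mono_set Ioo_subset_Icc_self
  exact (integrable_indicator_iff measurableSet_Iio).mpr this

private lemma int3 {α : ℝ} (h0 : 0 < α) {N : ℝ} (hN : 1 ≤ N) :
    IntegrableOn (fun r : ℝ => r ^ 2 * (Ici (2*N)).indicator (fun r => r ^ (-(3+α))) r)
      (Ioi (0:ℝ)) := by
  have h1 : (fun r : ℝ => r ^ 2 * (Ici (2*N)).indicator (fun r => r ^ (-(3+α))) r)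
      = (Ici (2*N)).indicator (fun r : ℝ => r ^ 2 * r ^ (-(3+α))) := by
    funext r
    exact (Set.indicator_mul_right _ (fun r : ℝ => r ^ 2) _).symm
  rw [h1]
  have base : IntegrableOn (fun r : ℝ => r ^ 2 * r ^ (-(3+α))) (Ici (2*N)) := by
    rw [integrableOn_Ici_iff_integrableOn_Ioi]
    refine (integrableOn_Ioi_rpow_of_lt (show -(1+α) < -1 by linarith)
      (by linarith : (0:ℝ) < 2*N)).congr_fun (fun r hr => ?_) measurableSet_Ioi
    have hr0 : (0:ℝ) < r := lt_trans (by linarith) hr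
    show r ^ (-(1+α)) = r ^ 2 * r ^ (-(3+α))
    rw [← Real.rpow_natCast r 2, ← Real.rpow_add hr0]
    norm_num
    ring_nf
  have : Integrable (fun r : ℝ => r ^ 2 * r ^ (-(3+α)))
      ((volume.restrict (Ioi (0:ℝ))).restrict (Ici (2*N))) := by
    have hset : Ici (2*N) ∩ Ioi (0:ℝ) = Ici (2*N) :=
      inter_eq_left.mpr (fun x hx => lt_of_lt_of_le (by linarith : (0:ℝ) < 2*N) hx)
    rw [Measure.restrict_restrict measurableSet_Ici, hset]
    exact base
  exact (integrable_indicator_iff measurableSet_Ici).mpr this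

set_option maxHeartbeats 2000000 in
/-- Weighted convolution estimate for the Riesz kernel, critical case `m = 3`:
`∫ |v-w|^{-α} ⟨w⟩^{-3} dw ≲ ⟨v⟩^{-α} log(1 + ⟨v⟩)`. -/
theorem riesz_convolution_critical (α : ℝ) (hα : α ∈ Ioo (0:ℝ) 3) :
    ∃ C > 0, ∀ v : EuclideanSpace ℝ (Fin 3),
      (∫ w : EuclideanSpace ℝ (Fin 3),
          ‖v - w‖ ^ (-α) * ((1 + ‖w‖ ^ 2) ^ ((1:ℝ)/2)) ^ (-(3:ℝ)))
        ≤ C * ((1 + ‖v‖ ^ 2) ^ ((1:ℝ)/2)) ^ (-α)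
            * Real.log (1 + (1 + ‖v‖ ^ 2) ^ ((1:ℝ)/2)) := by
  obtain ⟨h0, h3⟩ := hα
  set κ : ℝ := 3 * ((volume : Measure (EuclideanSpace ℝ (Fin 3)))
    (ball (0:EuclideanSpace ℝ (Fin 3)) 1)).toReal with hκdef
  have hκ0 : 0 ≤ κ := by
    rw [hκdef]; positivity
  set D1 : ℝ := 64 / (2 ^ ((3:ℝ) - α) * (3 - α)) with hD1def
  have hD10 : 0 ≤ D1 := by
    rw [hD1def]
    have h' : (0:ℝ) < 2 ^ ((3:ℝ) - α) := Real.rpow_pos_of_pos (by norm_num) _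
    exact le_of_lt (div_pos (by norm_num) (mul_pos h' (by linarith)))
  have hlog2 : 0 < Real.log 2 := Real.log_pos (by norm_num)
  have ht0 : 0 ≤ κ * D1 + κ / α :=
    add_nonneg (mul_nonneg hκ0 hD10) (div_nonneg hκ0 h0.le)
  have hCpos : 0 < (κ * D1 + κ / α) / Real.log 2 + κ * (2 ^ α * 4) + 1 := by
    have t1 : (0:ℝ) ≤ (κ * D1 + κ / α) / Real.log 2 := div_nonneg ht0 hlog2.le
    have t2 : (0:ℝ) ≤ κ * (2 ^ α * 4) := mul_nonneg hκ0 (by positivity)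
    linarith
  refine ⟨(κ * D1 + κ / α) / Real.log 2 + κ * (2 ^ α * 4) + 1, hCpos, fun v => ?_⟩
  have hrw : ∀ x : EuclideanSpace ℝ (Fin 3),
      (1 + ‖x‖ ^ 2) ^ ((1:ℝ)/2) = Real.sqrt (1 + ‖x‖ ^ 2) :=
    fun x => (Real.sqrt_eq_rpow _).symm
  simp only [hrw]
  set N := Real.sqrt (1 + ‖v‖ ^ 2) with hNdef
  have hN1 : 1 ≤ N := by
    have h' := Real.sqrt_le_sqrt (show (1:ℝ) ≤ 1 + ‖v‖ ^ 2 by nlinarith [sq_nonneg ‖v‖])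
    rwa [Real.sqrt_one] at h'
  have hN0 : 0 < N := lt_of_lt_of_le one_pos hN1
  have hvN : ‖v‖ ≤ N := by
    calc ‖v‖ = Real.sqrt (‖v‖ ^ 2) := (Real.sqrt_sq (norm_nonneg v)).symm
      _ ≤ N := Real.sqrt_le_sqrt (by linarith)
  have hNv : N ≤ 1 + ‖v‖ := sqrt_one_add_norm_sq_le v
  -- integrability of the three dominating pieces
  have hG1 : Integrable (fun w : EuclideanSpace ℝ (Fin 3) =>
      64 * N ^ (-(3:ℝ)) * (Iio (N/2)).indicator (fun r => r ^ (-α)) ‖v - w‖) :=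
    ((radial_integrable (int1 h3 (by positivity : (0:ℝ) < N/2))).comp_sub_left v).const_mul _
  have hG2 : Integrable (fun w : EuclideanSpace ℝ (Fin 3) =>
      (N/2) ^ (-α) * (Iio (2*N)).indicator
        (fun r => Real.sqrt (1 + r ^ 2) ^ (-(3:ℝ))) ‖w‖) :=
    (radial_integrable (int2 hN1)).const_mul _
  have hG3 : Integrable (fun w : EuclideanSpace ℝ (Fin 3) =>
      2 ^ α * (Ici (2*N)).indicator (fun r => r ^ (-(3+α))) ‖w‖) :=
    (radial_integrable (int3 h0 hN1)).const_mul _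
  -- pointwise bound
  have hfG : ∀ w : EuclideanSpace ℝ (Fin 3),
      ‖v - w‖ ^ (-α) * Real.sqrt (1 + ‖w‖ ^ 2) ^ (-(3:ℝ))
        ≤ 64 * N ^ (-(3:ℝ)) * (Iio (N/2)).indicator (fun r => r ^ (-α)) ‖v - w‖
          + (N/2) ^ (-α) * (Iio (2*N)).indicator
              (fun r => Real.sqrt (1 + r ^ 2) ^ (-(3:ℝ))) ‖w‖
          + 2 ^ α * (Ici (2*N)).indicator (fun r => r ^ (-(3+α))) ‖w‖ := by
    intro w
    have hw1 : 1 ≤ Real.sqrt (1 + ‖w‖ ^ 2) := by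
      have h' := Real.sqrt_le_sqrt (show (1:ℝ) ≤ 1 + ‖w‖ ^ 2 by nlinarith [sq_nonneg ‖w‖])
      rwa [Real.sqrt_one] at h'
    have hw2 : ‖w‖ ≤ Real.sqrt (1 + ‖w‖ ^ 2) := by
      calc ‖w‖ = Real.sqrt (‖w‖ ^ 2) := (Real.sqrt_sq (norm_nonneg w)).symm
        _ ≤ _ := Real.sqrt_le_sqrt (by linarith)
    have hnn1 : (0:ℝ) ≤ 64 * N ^ (-(3:ℝ))
        * (Iio (N/2)).indicator (fun r => r ^ (-α)) ‖v - w‖ :=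
      mul_nonneg (by positivity)
        (Set.indicator_apply_nonneg (fun _ => Real.rpow_nonneg (norm_nonneg _) _))
    have hnn2 : (0:ℝ) ≤ (N/2) ^ (-α) * (Iio (2*N)).indicator
        (fun r => Real.sqrt (1 + r ^ 2) ^ (-(3:ℝ))) ‖w‖ :=
      mul_nonneg (by positivity)
        (Set.indicator_apply_nonneg (fun _ => Real.rpow_nonneg (Real.sqrt_nonneg _) _))
    have hnn3 : (0:ℝ) ≤ 2 ^ α * (Ici (2*N)).indicator (fun r => r ^ (-(3+α))) ‖w‖ :=
      mul_nonneg (by positivity)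
        (Set.indicator_apply_nonneg (fun _ => Real.rpow_nonneg (norm_nonneg _) _))
    by_cases h1 : ‖v - w‖ < N / 2
    · rw [Set.indicator_of_mem (mem_Iio.mpr h1)]
      have hSw : N / 4 ≤ Real.sqrt (1 + ‖w‖ ^ 2) := by
        rcases le_or_gt N 4 with hc | hc
        · linarith
        · have hw' : ‖v‖ - ‖v - w‖ ≤ ‖w‖ := by
            have h'' := norm_sub_norm_le v (v - w)
            simpa using h''
          have : N / 4 ≤ ‖w‖ := by linarith
          linarith
      have hbound : Real.sqrt (1 + ‖w‖ ^ 2) ^ (-(3:ℝ)) ≤ 64 * N ^ (-(3:ℝ)) := by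
        have h1' : Real.sqrt (1 + ‖w‖ ^ 2) ^ (-(3:ℝ)) ≤ (N/4) ^ (-(3:ℝ)) :=
          Real.rpow_le_rpow_of_nonpos (by positivity) hSw (by norm_num)
        have h2' : (N/4 : ℝ) ^ (-(3:ℝ)) = 64 * N ^ (-(3:ℝ)) := by
          rw [Real.div_rpow hN0.le (by norm_num : (0:ℝ) ≤ 4),
            Real.rpow_neg (show (0:ℝ) ≤ 4 by norm_num), div_eq_mul_inv, inv_inv,
            show ((4:ℝ) ^ (3:ℝ)) = 64 by
              rw [show (3:ℝ) = ((3:ℕ):ℝ) by norm_num, Real.rpow_natCast]; norm_num]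
          ring
        linarith
      have hterm : ‖v - w‖ ^ (-α) * Real.sqrt (1 + ‖w‖ ^ 2) ^ (-(3:ℝ))
          ≤ 64 * N ^ (-(3:ℝ)) * ‖v - w‖ ^ (-α) := by
        calc ‖v - w‖ ^ (-α) * Real.sqrt (1 + ‖w‖ ^ 2) ^ (-(3:ℝ))
            ≤ ‖v - w‖ ^ (-α) * (64 * N ^ (-(3:ℝ))) :=
              mul_le_mul_of_nonneg_left hbound (Real.rpow_nonneg (norm_nonneg _) _)
          _ = 64 * N ^ (-(3:ℝ)) * ‖v - w‖ ^ (-α) := by ring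
      linarith
    · have hvw : N / 2 ≤ ‖v - w‖ := not_lt.mp h1
      rw [Set.indicator_of_notMem (show ‖v - w‖ ∉ Iio (N/2) from fun hm => h1 (mem_Iio.mp hm))]
      have hA : ‖v - w‖ ^ (-α) ≤ (N/2) ^ (-α) :=
        Real.rpow_le_rpow_of_nonpos (by positivity) hvw (by linarith)
      by_cases h2 : ‖w‖ < 2 * N
      · rw [Set.indicator_of_mem (mem_Iio.mpr h2)]
        have hterm : ‖v - w‖ ^ (-α) * Real.sqrt (1 + ‖w‖ ^ 2) ^ (-(3:ℝ))
            ≤ (N/2) ^ (-α) * Real.sqrt (1 + ‖w‖ ^ 2) ^ (-(3:ℝ)) :=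
          mul_le_mul_of_nonneg_right hA (Real.rpow_nonneg (Real.sqrt_nonneg _) _)
        have : 64 * N ^ (-(3:ℝ)) * (0:ℝ) = 0 := by ring
        linarith [hnn3, hterm]
      · have hw2N : 2*N ≤ ‖w‖ := not_lt.mp h2
        have hw0 : 0 < ‖w‖ := by linarith
        rw [Set.indicator_of_notMem (show ‖w‖ ∉ Iio (2*N) from fun hm => h2 (mem_Iio.mp hm)),
          Set.indicator_of_mem (mem_Ici.mpr hw2N)]
        have hvw2 : ‖w‖ / 2 ≤ ‖v - w‖ := by
          have h' : ‖w‖ - ‖v‖ ≤ ‖w - v‖ := norm_sub_norm_le w v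
          rw [norm_sub_rev] at h'
          linarith
        have hA3 : ‖v - w‖ ^ (-α) ≤ (‖w‖/2) ^ (-α) :=
          Real.rpow_le_rpow_of_nonpos (by positivity) hvw2 (by linarith)
        have hB3 : Real.sqrt (1 + ‖w‖ ^ 2) ^ (-(3:ℝ)) ≤ ‖w‖ ^ (-(3:ℝ)) :=
          Real.rpow_le_rpow_of_nonpos hw0 hw2 (by norm_num)
        have hprod : ‖v - w‖ ^ (-α) * Real.sqrt (1 + ‖w‖ ^ 2) ^ (-(3:ℝ))
            ≤ (‖w‖/2) ^ (-α) * ‖w‖ ^ (-(3:ℝ)) :=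
          mul_le_mul hA3 hB3 (Real.rpow_nonneg (Real.sqrt_nonneg _) _)
            (Real.rpow_nonneg (by positivity) _)
        have heq3 : (‖w‖/2) ^ (-α) * ‖w‖ ^ (-(3:ℝ)) = 2 ^ α * ‖w‖ ^ (-(3+α)) := by
          rw [Real.div_rpow (norm_nonneg w) (show (0:ℝ) ≤ 2 by norm_num),
            Real.rpow_neg (show (0:ℝ) ≤ 2 by norm_num), div_eq_mul_inv, inv_inv,
            show ‖w‖ ^ (-α) * 2 ^ α * ‖w‖ ^ (-(3:ℝ))
              = 2 ^ α * (‖w‖ ^ (-α) * ‖w‖ ^ (-(3:ℝ))) by ring,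
            ← Real.rpow_add hw0, show -α + -(3:ℝ) = -(3+α) by ring]
        have : 64 * N ^ (-(3:ℝ)) * (0:ℝ) = 0 := by ring
        have h2z : (N/2) ^ (-α) * (0:ℝ) = 0 := by ring
        linarith [hprod, heq3.symm.le]
  -- integrability of the integrand
  have hmeas : Measurable (fun w : EuclideanSpace ℝ (Fin 3) =>
      ‖v - w‖ ^ (-α) * Real.sqrt (1 + ‖w‖ ^ 2) ^ (-(3:ℝ))) := by fun_prop
  have hfnn : ∀ w : EuclideanSpace ℝ (Fin 3),
      0 ≤ ‖v - w‖ ^ (-α) * Real.sqrt (1 + ‖w‖ ^ 2) ^ (-(3:ℝ)) := fun w =>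
    mul_nonneg (Real.rpow_nonneg (norm_nonneg _) _) (Real.rpow_nonneg (Real.sqrt_nonneg _) _)
  have hGsum : Integrable (fun w : EuclideanSpace ℝ (Fin 3) =>
      64 * N ^ (-(3:ℝ)) * (Iio (N/2)).indicator (fun r => r ^ (-α)) ‖v - w‖
        + (N/2) ^ (-α) * (Iio (2*N)).indicator
            (fun r => Real.sqrt (1 + r ^ 2) ^ (-(3:ℝ))) ‖w‖
        + 2 ^ α * (Ici (2*N)).indicator (fun r => r ^ (-(3+α))) ‖w‖) :=
    (hG1.add hG2).add hG3
  have hint : Integrable (fun w : EuclideanSpace ℝ (Fin 3) =>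
      ‖v - w‖ ^ (-α) * Real.sqrt (1 + ‖w‖ ^ 2) ^ (-(3:ℝ))) := by
    apply Integrable.mono' hGsum hmeas.aestronglyMeasurable
    filter_upwards with w
    rw [Real.norm_eq_abs, abs_of_nonneg (hfnn w)]
    exact hfG w
  -- split
  have hsplit : ∫ w : EuclideanSpace ℝ (Fin 3),
      ‖v - w‖ ^ (-α) * Real.sqrt (1 + ‖w‖ ^ 2) ^ (-(3:ℝ))
      ≤ (∫ w : EuclideanSpace ℝ (Fin 3),
          64 * N ^ (-(3:ℝ)) * (Iio (N/2)).indicator (fun r => r ^ (-α)) ‖v - w‖)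
        + (∫ w : EuclideanSpace ℝ (Fin 3),
          (N/2) ^ (-α) * (Iio (2*N)).indicator
            (fun r => Real.sqrt (1 + r ^ 2) ^ (-(3:ℝ))) ‖w‖)
        + (∫ w : EuclideanSpace ℝ (Fin 3),
          2 ^ α * (Ici (2*N)).indicator (fun r => r ^ (-(3+α))) ‖w‖) := by
    calc ∫ w : EuclideanSpace ℝ (Fin 3),
        ‖v - w‖ ^ (-α) * Real.sqrt (1 + ‖w‖ ^ 2) ^ (-(3:ℝ))
        ≤ ∫ w : EuclideanSpace ℝ (Fin 3),
          (64 * N ^ (-(3:ℝ)) * (Iio (N/2)).indicator (fun r => r ^ (-α)) ‖v - w‖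
            + (N/2) ^ (-α) * (Iio (2*N)).indicator
                (fun r => Real.sqrt (1 + r ^ 2) ^ (-(3:ℝ))) ‖w‖
            + 2 ^ α * (Ici (2*N)).indicator (fun r => r ^ (-(3+α))) ‖w‖) :=
          integral_mono hint hGsum (fun w => hfG w)
      _ = _ := by
          have e12 := integral_add (μ := volume) hG1 hG2
          have e123 := integral_add (μ := volume) (hG1.add hG2) hG3
          simp only [Pi.add_apply] at e12 e123
          rw [e123, e12]
  -- evaluate the three integrals
  have hI1 : (∫ w : EuclideanSpace ℝ (Fin 3),
      64 * N ^ (-(3:ℝ)) * (Iio (N/2)).indicator (fun r => r ^ (-α)) ‖v - w‖)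
      = 64 * N ^ (-(3:ℝ)) * (κ * ((N/2) ^ (3 - α) / (3 - α))) := by
    rw [integral_const_mul]
    congr 1
    rw [show (∫ w : EuclideanSpace ℝ (Fin 3),
        (Iio (N/2)).indicator (fun r => r ^ (-α)) ‖v - w‖)
        = ∫ u : EuclideanSpace ℝ (Fin 3),
          (Iio (N/2)).indicator (fun r => r ^ (-α)) ‖u‖ from
      integral_sub_left_eq_self
        (fun u : EuclideanSpace ℝ (Fin 3) =>
          (Iio (N/2)).indicator (fun r => r ^ (-α)) ‖u‖) volume v]
    rw [radial_integral, ← hκdef, key1 h0 h3 (show (0:ℝ) < N/2 by positivity)]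
  have hI2 : (∫ w : EuclideanSpace ℝ (Fin 3),
      (N/2) ^ (-α) * (Iio (2*N)).indicator
        (fun r => Real.sqrt (1 + r ^ 2) ^ (-(3:ℝ))) ‖w‖)
      ≤ (N/2) ^ (-α) * (κ * (4 * Real.log (1 + N))) := by
    rw [integral_const_mul]
    apply mul_le_mul_of_nonneg_left ?_ (Real.rpow_nonneg (by positivity) _)
    rw [radial_integral, ← hκdef]
    exact mul_le_mul_of_nonneg_left (key2 hN1) hκ0
  have hI3 : (∫ w : EuclideanSpace ℝ (Fin 3),
      2 ^ α * (Ici (2*N)).indicator (fun r => r ^ (-(3+α))) ‖w‖)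
      = 2 ^ α * (κ * ((2*N) ^ (-α) / α)) := by
    rw [integral_const_mul, radial_integral, ← hκdef, key3 h0 hN1]
  -- algebra
  have hp1 : (0:ℝ) < 2 ^ ((3:ℝ) - α) := Real.rpow_pos_of_pos (by norm_num) _
  have e1 : 64 * N ^ (-(3:ℝ)) * (κ * ((N/2) ^ (3 - α) / (3 - α)))
      = κ * D1 * N ^ (-α) := by
    have h2N : N ^ (-(3:ℝ)) * (N/2) ^ ((3:ℝ) - α) = N ^ (-α) / 2 ^ ((3:ℝ) - α) := by
      rw [Real.div_rpow hN0.le (show (0:ℝ) ≤ 2 by norm_num),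
        show N ^ (-(3:ℝ)) * (N ^ ((3:ℝ) - α) / 2 ^ ((3:ℝ) - α))
          = (N ^ (-(3:ℝ)) * N ^ ((3:ℝ) - α)) / 2 ^ ((3:ℝ) - α) by ring,
        ← Real.rpow_add hN0, show -(3:ℝ) + ((3:ℝ) - α) = -α by ring]
    calc 64 * N ^ (-(3:ℝ)) * (κ * ((N/2) ^ ((3:ℝ) - α) / (3 - α)))
        = κ * (N ^ (-(3:ℝ)) * (N/2) ^ ((3:ℝ) - α)) * (64 / (3 - α)) := by ring
      _ = κ * (N ^ (-α) / 2 ^ ((3:ℝ) - α)) * (64 / (3 - α)) := by rw [h2N]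
      _ = κ * D1 * N ^ (-α) := by
          rw [hD1def]
          field_simp
  have e2 : (N/2) ^ (-α) = 2 ^ α * N ^ (-α) := by
    rw [Real.div_rpow hN0.le (show (0:ℝ) ≤ 2 by norm_num),
      Real.rpow_neg (show (0:ℝ) ≤ 2 by norm_num), div_eq_mul_inv, inv_inv, mul_comm]
  have e3 : (2:ℝ) ^ α * ((2*N) ^ (-α)) = N ^ (-α) := by
    rw [Real.mul_rpow (show (0:ℝ) ≤ 2 by norm_num) hN0.le, ← mul_assoc,
      ← Real.rpow_add (show (0:ℝ) < 2 by norm_num), show α + -α = 0 by ring,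
      Real.rpow_zero, one_mul]
  -- final assembly
  have hS0 : (0:ℝ) ≤ N ^ (-α) := Real.rpow_nonneg hN0.le _
  have hL2 : Real.log 2 ≤ Real.log (1 + N) := Real.log_le_log (by norm_num) (by linarith)
  have hL0 : 0 < Real.log (1 + N) := lt_of_lt_of_le hlog2 hL2
  have hSL : (0:ℝ) ≤ N ^ (-α) * Real.log (1 + N) := mul_nonneg hS0 hL0.le
  have hI3' : 2 ^ α * (κ * ((2*N) ^ (-α) / α)) = κ / α * N ^ (-α) := by
    calc (2:ℝ) ^ α * (κ * ((2*N) ^ (-α) / α))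
        = κ / α * (2 ^ α * (2*N) ^ (-α)) := by ring
      _ = κ / α * N ^ (-α) := by rw [e3]
  have hI2' : (N/2) ^ (-α) * (κ * (4 * Real.log (1 + N)))
      = κ * (2 ^ α * 4) * (N ^ (-α) * Real.log (1 + N)) := by
    rw [e2]; ring
  have hq : (κ * D1 + κ / α) * N ^ (-α)
      ≤ (κ * D1 + κ / α) / Real.log 2 * (N ^ (-α) * Real.log (1 + N)) := by
    have hmul : (κ * D1 + κ / α) * N ^ (-α) * Real.log 2
        ≤ (κ * D1 + κ / α) * N ^ (-α) * Real.log (1 + N) :=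
      mul_le_mul_of_nonneg_left hL2 (mul_nonneg ht0 hS0)
    calc (κ * D1 + κ / α) * N ^ (-α)
        = ((κ * D1 + κ / α) * N ^ (-α) * Real.log 2) / Real.log 2 := by
          field_simp
      _ ≤ ((κ * D1 + κ / α) * N ^ (-α) * Real.log (1 + N)) / Real.log 2 :=
          div_le_div_of_nonneg_right ?hh hlog2.le |>.trans_eq rfl
      _ = (κ * D1 + κ / α) / Real.log 2 * (N ^ (-α) * Real.log (1 + N)) := by ring
    case hh => exact hmul
  calc (∫ w : EuclideanSpace ℝ (Fin 3),
      ‖v - w‖ ^ (-α) * Real.sqrt (1 + ‖w‖ ^ 2) ^ (-(3:ℝ)))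
      ≤ 64 * N ^ (-(3:ℝ)) * (κ * ((N/2) ^ (3 - α) / (3 - α)))
        + (N/2) ^ (-α) * (κ * (4 * Real.log (1 + N)))
        + 2 ^ α * (κ * ((2*N) ^ (-α) / α)) := by
        have := hsplit
        rw [hI1, hI3] at this
        linarith [hI2]
    _ = (κ * D1 + κ / α) * N ^ (-α)
        + κ * (2 ^ α * 4) * (N ^ (-α) * Real.log (1 + N)) := by
        rw [e1, hI2', hI3']; ring
    _ ≤ (κ * D1 + κ / α) / Real.log 2 * (N ^ (-α) * Real.log (1 + N))
        + κ * (2 ^ α * 4) * (N ^ (-α) * Real.log (1 + N)) := by linarith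
    _ ≤ ((κ * D1 + κ / α) / Real.log 2 + κ * (2 ^ α * 4) + 1) * N ^ (-α)
        * Real.log (1 + N) := by nlinarith [hSL]
end

section
/- Fix a non-integer m ∈ (4,5). Let h : ℝ³ → [0,∞) satisfy h(w) ≤ M ⟨w⟩^{-m} for all w. Define A[h](v) = (1/8π)∫_{ℝ³} Π(v-w)|v-w|^{-1} h(w) dw with Π(z) = Id - z⊗z/|z|². Then there is C = C(m) such that for all v ∈ ℝ³, v · A[h](v) v ≤ C M ⟨v⟩^{4-m}. -/
open MeasureTheory Set RealInnerProductSpace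

/-- The projection `Π(z)v = v - (⟨z,v⟩/|z|²) z` onto the plane orthogonal to `z`. -/
noncomputable def landauProj (z p : EuclideanSpace ℝ (Fin 3)) : EuclideanSpace ℝ (Fin 3) :=
  p - (⟪z, p⟫ / ‖z‖ ^ 2) • z

section LandauAux

open Metric Pointwise

local notation "E3" => EuclideanSpace ℝ (Fin 3)

private lemma aux_integrableOn_rpow_ball {p : ℝ} (hp3 : -3 < p) (hp0 : p < 0) :
    IntegrableOn (fun x : E3 => ‖x‖ ^ p) (ball 0 1) := by
  have hmeas : Measurable fun x : E3 => ‖x‖ ^ p := by fun_prop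
  have hnn : ∀ x : E3, 0 ≤ ‖x‖ ^ p := fun x => Real.rpow_nonneg (norm_nonneg _) _
  refine ⟨hmeas.aestronglyMeasurable.restrict, ?_⟩
  rw [hasFiniteIntegral_iff_ofReal (Filter.Eventually.of_forall hnn)]
  set μ' := volume.restrict (ball (0:E3) 1) with hμ'
  rw [lintegral_eq_lintegral_meas_le μ' (Filter.Eventually.of_forall hnn) hmeas.aemeasurable]
  have hSmeas : ∀ t : ℝ, MeasurableSet {a : E3 | t ≤ ‖a‖ ^ p} := fun t =>
    hmeas measurableSet_Ici
  have key : ∀ t : ℝ, 0 < t → {a : E3 | t ≤ ‖a‖ ^ p} ⊆ closedBall 0 (t ^ p⁻¹) := by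
    intro t ht x hx
    simp only [mem_setOf_eq] at hx
    have hx0 : x ≠ 0 := by
      rintro rfl
      rw [norm_zero, Real.zero_rpow hp0.ne] at hx
      linarith
    rw [mem_closedBall_zero_iff]
    have h2 := Real.rpow_le_rpow_of_nonpos ht hx (le_of_lt (by exact inv_lt_zero.mpr hp0))
    rwa [← Real.rpow_mul (norm_nonneg _), mul_inv_cancel₀ hp0.ne, Real.rpow_one] at h2
  calc ∫⁻ t in Ioi 0, μ' {a | t ≤ ‖a‖ ^ p}
      ≤ ∫⁻ t in Ioc 0 1 ∪ Ioi 1, μ' {a | t ≤ ‖a‖ ^ p} :=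
        lintegral_mono_set Ioi_subset_Ioc_union_Ioi
    _ ≤ (∫⁻ t in Ioc 0 1, μ' {a | t ≤ ‖a‖ ^ p}) + ∫⁻ t in Ioi 1, μ' {a | t ≤ ‖a‖ ^ p} :=
        lintegral_union_le _ _ _
    _ < ⊤ := ENNReal.add_lt_top.2 ⟨?_, ?_⟩
  · calc (∫⁻ t in Ioc 0 1, μ' {a | t ≤ ‖a‖ ^ p})
        ≤ ∫⁻ _ in Ioc (0:ℝ) 1, volume (ball (0:E3) 1) := by
          refine setLIntegral_mono' measurableSet_Ioc fun t _ => ?_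
          rw [hμ', Measure.restrict_apply (hSmeas t)]
          exact measure_mono inter_subset_right
      _ = volume (ball (0:E3) 1) * volume (Ioc (0:ℝ) 1) := setLIntegral_const _ _
      _ < ⊤ := ENNReal.mul_lt_top measure_ball_lt_top (by simp)
  · have hq : 3 * p⁻¹ < -1 := by
      have h1 : (3:ℝ) / p < -1 := by
        rw [div_lt_iff_of_neg hp0]
        linarith
      rw [← div_eq_mul_inv]
      exact h1
    calc (∫⁻ t in Ioi 1, μ' {a | t ≤ ‖a‖ ^ p})
        ≤ ∫⁻ t in Ioi 1, ENNReal.ofReal (t ^ (3 * p⁻¹)) * volume (ball (0:E3) 1) := by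
          refine setLIntegral_mono' measurableSet_Ioi fun t ht => ?_
          have ht0 : (0:ℝ) < t := lt_trans one_pos ht
          have h1 : μ' {a | t ≤ ‖a‖ ^ p} ≤ volume (closedBall (0:E3) (t ^ p⁻¹)) := by
            rw [hμ', Measure.restrict_apply (hSmeas t)]
            exact measure_mono (inter_subset_left.trans (key t ht0))
          refine h1.trans ?_
          rw [Measure.addHaar_closedBall _ _ (Real.rpow_nonneg ht0.le _)]
          have h3 : (t ^ p⁻¹) ^ Module.finrank ℝ E3 = t ^ (3 * p⁻¹) := by
            rw [finrank_euclideanSpace_fin, ← Real.rpow_natCast (t ^ p⁻¹) 3,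
              ← Real.rpow_mul ht0.le, mul_comm p⁻¹]
            norm_num
          rw [h3]
      _ = volume (ball (0:E3) 1) * ∫⁻ t in Ioi 1, ENNReal.ofReal (t ^ (3 * p⁻¹)) := by
          rw [lintegral_mul_const' _ _ measure_ball_lt_top.ne, mul_comm]
      _ < ⊤ := ENNReal.mul_lt_top measure_ball_lt_top
          (integrableOn_Ioi_rpow_of_lt hq one_pos).setLIntegral_lt_top

private lemma aux_integrableOn_rpow_compl {p : ℝ} (hp : p < -3) :
    IntegrableOn (fun x : E3 => ‖x‖ ^ p) {x : E3 | 1 ≤ ‖x‖} := by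
  have hr : (Module.finrank ℝ E3 : ℝ) < -p := by
    rw [finrank_euclideanSpace_fin]; norm_num; linarith
  have hg : Integrable (fun x : E3 => (2:ℝ) ^ (-p) * (1 + ‖x‖) ^ (-(-p))) :=
    (integrable_one_add_norm hr).const_mul _
  have hg' : Integrable (fun x : E3 => (2:ℝ) ^ (-p) * (1 + ‖x‖) ^ p) := by
    simpa using hg
  refine Integrable.mono' hg'.integrableOn ?_ ?_
  · exact (Measurable.aestronglyMeasurable (by fun_prop)).restrict
  · refine (ae_restrict_mem ((isClosed_le continuous_const continuous_norm).measurableSet)).mono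
      fun x hx => ?_
    have hx1 : (1:ℝ) ≤ ‖x‖ := hx
    have h0 : (0:ℝ) < ‖x‖ := lt_of_lt_of_le one_pos hx1
    rw [Real.norm_eq_abs, abs_of_nonneg (Real.rpow_nonneg (norm_nonneg x) p)]
    have h1 : (1:ℝ) + ‖x‖ ≤ 2 * ‖x‖ := by linarith
    have h2 : (2 * ‖x‖) ^ p ≤ (1 + ‖x‖) ^ p :=
      Real.rpow_le_rpow_of_nonpos (by linarith) h1 (by linarith)
    have h3 : (2 * ‖x‖) ^ p = 2 ^ p * ‖x‖ ^ p := Real.mul_rpow (by norm_num) (norm_nonneg x)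
    have h5 : ‖x‖ ^ p ≤ (2:ℝ)^(-p) * (2 ^ p * ‖x‖ ^ p) := by
      rw [← mul_assoc, ← Real.rpow_add two_pos, neg_add_cancel, Real.rpow_zero, one_mul]
    calc ‖x‖ ^ p ≤ (2:ℝ)^(-p) * ((2 * ‖x‖) ^ p) := by rw [h3]; exact h5
      _ ≤ (2:ℝ)^(-p) * (1 + ‖x‖) ^ p := by
          have h6 : (0:ℝ) ≤ (2:ℝ)^(-p) := (Real.rpow_pos_of_pos two_pos _).le
          nlinarith

private lemma aux_scale {p R : ℝ} (hR : 0 < R) {s : Set E3} (hs : MeasurableSet s)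
    (hint : IntegrableOn (fun x : E3 => ‖x‖ ^ p) s) :
    IntegrableOn (fun x : E3 => ‖x‖ ^ p) (R • s) ∧
    ∫ x in R • s, ‖x‖ ^ p = R ^ p * R ^ 3 * ∫ x in s, ‖x‖ ^ p := by
  set F : E3 → ℝ := s.indicator (fun x => ‖x‖ ^ p) with hF_def
  have hF : Integrable F := (integrable_indicator_iff hs).2 hint
  have hsR : MeasurableSet (R • s) := by
    have : R • s = (fun x : E3 => R⁻¹ • x) ⁻¹' s := by
      ext x; rw [mem_preimage, mem_smul_set_iff_inv_smul_mem₀ hR.ne' s x]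
    rw [this]
    exact hs.preimage (by fun_prop)
  have hcancel : R ^ p * R ^ (-p) = 1 := by
    rw [← Real.rpow_add hR, add_neg_cancel, Real.rpow_zero]
  have h1 : ∀ x : E3, F (R⁻¹ • x) = R ^ (-p) * (R • s).indicator (fun y => ‖y‖ ^ p) x := by
    intro x
    by_cases hx : x ∈ R • s
    · have hx' : R⁻¹ • x ∈ s := (mem_smul_set_iff_inv_smul_mem₀ hR.ne' s x).1 hx
      rw [hF_def, indicator_of_mem hx', indicator_of_mem hx, norm_smul, norm_inv,
        Real.norm_eq_abs, abs_of_pos hR,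
        Real.mul_rpow (inv_nonneg.2 hR.le) (norm_nonneg _), Real.inv_rpow hR.le,
        ← Real.rpow_neg hR.le]
    · have hx' : R⁻¹ • x ∉ s := fun h => hx ((mem_smul_set_iff_inv_smul_mem₀ hR.ne' s x).2 h)
      rw [hF_def, indicator_of_notMem hx', indicator_of_notMem hx, mul_zero]
  have hcomp : Integrable (fun x : E3 => F (R⁻¹ • x)) :=
    (integrable_comp_smul_iff volume F (inv_ne_zero hR.ne')).2 hF
  have heq : (fun x : E3 => R ^ p * F (R⁻¹ • x))
      = (R • s).indicator (fun y => ‖y‖ ^ p) := by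
    funext x
    rw [h1 x, ← mul_assoc, hcancel, one_mul]
  have hind : Integrable ((R • s).indicator (fun y : E3 => ‖y‖ ^ p)) := by
    have := hcomp.const_mul (R ^ p)
    rwa [heq] at this
  refine ⟨(integrable_indicator_iff hsR).1 hind, ?_⟩
  have hI := MeasureTheory.Measure.integral_comp_inv_smul_of_nonneg
    (volume : Measure E3) F hR.le
  rw [show (fun x : E3 => F (R⁻¹ • x)) = fun x : E3 => R ^ (-p) *
        (R • s).indicator (fun y => ‖y‖ ^ p) x from funext h1] at hI
  rw [MeasureTheory.integral_const_mul, integral_indicator hsR] at hI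
  rw [hF_def, integral_indicator hs, finrank_euclideanSpace_fin, smul_eq_mul] at hI
  calc ∫ x in R • s, ‖x‖ ^ p
      = (R ^ p * R ^ (-p)) * ∫ x in R • s, ‖x‖ ^ p := by rw [hcancel, one_mul]
    _ = R ^ p * (R ^ (-p) * ∫ x in R • s, ‖x‖ ^ p) := by ring
    _ = R ^ p * (R ^ 3 * ∫ x in s, ‖x‖ ^ p) := by rw [hI]
    _ = R ^ p * R ^ 3 * ∫ x in s, ‖x‖ ^ p := by ring

private noncomputable def jap (v : E3) : ℝ := (1 + ‖v‖ ^ 2) ^ ((1:ℝ)/2)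

private lemma jap_eq_sqrt (v : E3) : jap v = Real.sqrt (1 + ‖v‖ ^ 2) := by
  rw [Real.sqrt_eq_rpow]; rfl

private lemma jap_sq (v : E3) : jap v ^ 2 = 1 + ‖v‖ ^ 2 := by
  rw [jap_eq_sqrt, Real.sq_sqrt (by positivity)]

private lemma jap_nonneg (v : E3) : 0 ≤ jap v := by
  rw [jap_eq_sqrt]; exact Real.sqrt_nonneg _

private lemma one_le_jap (v : E3) : 1 ≤ jap v := by
  have h1 := jap_sq v
  have h2 := jap_nonneg v
  nlinarith [norm_nonneg v, sq_nonneg (‖v‖)]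

private lemma jap_pos (v : E3) : 0 < jap v := lt_of_lt_of_le one_pos (one_le_jap v)

private lemma norm_le_jap (v : E3) : ‖v‖ ≤ jap v := by
  have h1 := jap_sq v
  have h2 := jap_nonneg v
  nlinarith [norm_nonneg v]

private lemma jap_lip (v w : E3) : jap v ≤ jap w + ‖v - w‖ := by
  have h1 := jap_sq v
  have h2 := jap_sq w
  have h3 := jap_nonneg v
  have h4 := jap_nonneg w
  have h5 : ‖v‖ ≤ ‖w‖ + ‖v - w‖ := by
    have := norm_sub_norm_le v w; linarith
  have h6 := norm_le_jap w
  have h7 := norm_nonneg (v - w)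
  have h8 := norm_nonneg v
  have h9 := norm_nonneg w
  nlinarith [sq_nonneg (jap v - jap w - ‖v - w‖), sq_nonneg (jap v + jap w + ‖v - w‖)]

private lemma inner_landauProj_nonneg (v w : E3) : 0 ≤ ⟪v, landauProj (v - w) v⟫ := by
  set z := v - w with hz_def
  have hval : ⟪v, landauProj z v⟫ = ⟪v, v⟫ - (⟪z, v⟫ / ‖z‖ ^ 2) * ⟪v, z⟫ := by
    rw [landauProj, inner_sub_right, real_inner_smul_right]
  rw [hval]
  by_cases hz : z = 0
  · rw [hz]
    simp only [inner_zero_left, zero_div, zero_mul, sub_zero]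
    exact real_inner_self_nonneg
  · have hN : (0:ℝ) < ‖z‖ ^ 2 := pow_pos (norm_pos_iff.2 hz) 2
    have hCS := real_inner_mul_inner_self_le z v
    rw [real_inner_self_eq_norm_sq, real_inner_self_eq_norm_sq] at hCS
    have hcomm : ⟪v, z⟫ = ⟪z, v⟫ := real_inner_comm z v
    rw [hcomm, real_inner_self_eq_norm_sq]
    have h5 : ⟪z, v⟫ / ‖z‖ ^ 2 * ⟪z, v⟫ = ⟪z, v⟫ * ⟪z, v⟫ / ‖z‖ ^ 2 := by ring
    have h6 : ⟪z, v⟫ * ⟪z, v⟫ / ‖z‖ ^ 2 ≤ ‖v‖ ^ 2 := by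
      rw [div_le_iff₀ hN]; nlinarith
    linarith

private lemma inner_landauProj_le (v w : E3) : ⟪v, landauProj (v - w) v⟫ ≤ 1 + ‖w‖ ^ 2 := by
  set z := v - w with hz_def
  have hval : ⟪v, landauProj z v⟫ = ⟪v, v⟫ - (⟪z, v⟫ / ‖z‖ ^ 2) * ⟪v, z⟫ := by
    rw [landauProj, inner_sub_right, real_inner_smul_right]
  rw [hval]
  by_cases hz : z = 0
  · have hvw : v = w := by rwa [hz_def, sub_eq_zero] at hz
    rw [hz]
    simp only [inner_zero_left, zero_div, zero_mul, sub_zero]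
    rw [real_inner_self_eq_norm_sq, hvw]
    nlinarith [sq_nonneg ‖w‖]
  · have hN : (0:ℝ) < ‖z‖ ^ 2 := pow_pos (norm_pos_iff.2 hz) 2
    have hcomm : ⟪v, z⟫ = ⟪z, v⟫ := real_inner_comm z v
    have hv : v = w + z := by rw [hz_def]; abel
    have hA : ⟪z, v⟫ = ⟪z, w⟫ + ‖z‖ ^ 2 := by
      rw [hv, inner_add_right, real_inner_self_eq_norm_sq]
    have hv2 : ‖v‖ ^ 2 = ‖w‖ ^ 2 + 2 * ⟪z, w⟫ + ‖z‖ ^ 2 := by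
      rw [hv, norm_add_sq_real, real_inner_comm w z]
    rw [hcomm, real_inner_self_eq_norm_sq]
    have key : ‖v‖ ^ 2 - ⟪z, v⟫ / ‖z‖ ^ 2 * ⟪z, v⟫ = ‖w‖ ^ 2 - ⟪z, w⟫ * ⟪z, w⟫ / ‖z‖ ^ 2 := by
      rw [hv2, hA]; field_simp; ring
    rw [key]
    have h7 : 0 ≤ ⟪z, w⟫ * ⟪z, w⟫ / ‖z‖ ^ 2 := div_nonneg (mul_self_nonneg _) hN.le
    linarith

private lemma aux_ball {p R : ℝ} (hR : 0 < R) (h3 : -3 < p) (h0 : p < 0) :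
    IntegrableOn (fun x : E3 => ‖x‖ ^ p) (ball 0 R) ∧
    ∫ x in ball (0:E3) R, ‖x‖ ^ p = R ^ p * R ^ 3 * ∫ x in ball (0:E3) 1, ‖x‖ ^ p := by
  have h := aux_scale hR measurableSet_ball (aux_integrableOn_rpow_ball h3 h0)
  rwa [smul_unitBall_of_pos hR] at h

private lemma aux_compl {p R : ℝ} (hR : 0 < R) (hp : p < -3) :
    IntegrableOn (fun x : E3 => ‖x‖ ^ p) {x : E3 | R ≤ ‖x‖} ∧
    ∫ x in {x : E3 | R ≤ ‖x‖}, ‖x‖ ^ p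
      = R ^ p * R ^ 3 * ∫ x in {x : E3 | 1 ≤ ‖x‖}, ‖x‖ ^ p := by
  have hS : MeasurableSet {x : E3 | 1 ≤ ‖x‖} :=
    (isClosed_le continuous_const continuous_norm).measurableSet
  have hsm : R • {x : E3 | 1 ≤ ‖x‖} = {x : E3 | R ≤ ‖x‖} := by
    ext x
    rw [mem_smul_set_iff_inv_smul_mem₀ hR.ne']
    simp only [mem_setOf_eq, norm_smul, norm_inv, Real.norm_eq_abs, abs_of_pos hR]
    rw [show R⁻¹ * ‖x‖ = ‖x‖ / R from by ring, le_div_iff₀ hR, one_mul]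
  have h := aux_scale hR hS (aux_integrableOn_rpow_compl hp)
  rwa [hsm] at h

private lemma measurableSet_normSet (R : ℝ) : MeasurableSet {x : E3 | R ≤ ‖x‖} :=
  (isClosed_le continuous_const continuous_norm).measurableSet

end LandauAux

set_option maxHeartbeats 1000000 in
/-- Pointwise weighted bound on the Landau diffusion quadratic form:
for non-integer `m ∈ (4,5)` and `0 ≤ h ≤ M⟨·⟩^{-m}`, one has `v·A[h]v ≤ C M ⟨v⟩^{4-m}`. -/
theorem landau_diffusion_quadratic_bound (m : ℝ) (hm : m ∈ Ioo (4:ℝ) 5)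
    (hmint : ∀ n : ℤ, m ≠ (n : ℝ)) :
    ∃ C > 0, ∀ (M : ℝ) (h : EuclideanSpace ℝ (Fin 3) → ℝ),
      (∀ w, 0 ≤ h w) →
      (∀ w, h w ≤ M * ((1 + ‖w‖ ^ 2) ^ ((1:ℝ)/2)) ^ (-m)) →
      ∀ v : EuclideanSpace ℝ (Fin 3),
        (1 / (8 * Real.pi)) *
            (∫ w : EuclideanSpace ℝ (Fin 3),
              ⟪v, landauProj (v - w) v⟫ * h w / ‖v - w‖)
          ≤ C * M * ((1 + ‖v‖ ^ 2) ^ ((1:ℝ)/2)) ^ (4 - m) := by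
  obtain ⟨hm4, hm5⟩ := hm
  have hpi : (0:ℝ) < Real.pi := Real.pi_pos
  set c1 : ℝ := ∫ x in Metric.ball (0:EuclideanSpace ℝ (Fin 3)) 1, ‖x‖ ^ (-1:ℝ) with hc1_def
  set c2 : ℝ := ∫ x in Metric.ball (0:EuclideanSpace ℝ (Fin 3)) 1, ‖x‖ ^ (2-m) with hc2_def
  set c3 : ℝ := ∫ x in {x : EuclideanSpace ℝ (Fin 3) | 1 ≤ ‖x‖}, ‖x‖ ^ (1-m) with hc3_def
  have hc1n : 0 ≤ c1 := setIntegral_nonneg measurableSet_ball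
    (fun x _ => Real.rpow_nonneg (norm_nonneg x) _)
  have hc2n : 0 ≤ c2 := setIntegral_nonneg measurableSet_ball
    (fun x _ => Real.rpow_nonneg (norm_nonneg x) _)
  have hc3n : 0 ≤ c3 := setIntegral_nonneg (measurableSet_normSet 1)
    (fun x _ => Real.rpow_nonneg (norm_nonneg x) _)
  have h2m : (0:ℝ) < 2^(m-2) := Real.rpow_pos_of_pos two_pos _
  set K : ℝ := 2^(m-2)*c1 + 128*4^(2-m)*c2 + 128*4^(1-m)*c3 with hK_def
  have hKn : 0 ≤ K := by
    have a1 : (0:ℝ) ≤ 2^(m-2)*c1 := mul_nonneg h2m.le hc1n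
    have a2 : (0:ℝ) ≤ 128*4^(2-m)*c2 := mul_nonneg (by positivity) hc2n
    have a3 : (0:ℝ) ≤ 128*4^(1-m)*c3 := mul_nonneg (by positivity) hc3n
    rw [hK_def]; linarith
  refine ⟨K/(8*Real.pi) + 1, by positivity, ?_⟩
  intro M h hpos hbound v
  have hM : 0 ≤ M := by
    have h0 := (hpos 0).trans (hbound 0)
    simpa using h0
  have hjv : ((1 + ‖v‖^2) ^ ((1:ℝ)/2)) = jap v := rfl
  rw [hjv]
  set a : ℝ := jap v with ha_def
  have ha1 : 1 ≤ a := one_le_jap v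
  have ha0 : 0 < a := jap_pos v
  set r₁ : ℝ := a/2 with hr1_def
  set r₂ : ℝ := 4*a with hr2_def
  have hr1 : 0 < r₁ := by rw [hr1_def]; linarith
  have hr2 : 0 < r₂ := by rw [hr2_def]; linarith
  obtain ⟨hI1, hV1⟩ := aux_ball (p := (-1:ℝ)) hr1 (by norm_num) (by norm_num)
  obtain ⟨hI2, hV2⟩ := aux_ball (p := 2-m) hr2 (by linarith) (by linarith)
  obtain ⟨hI3, hV3⟩ := aux_compl (p := 1-m) hr2 (by linarith)
  set g1 : EuclideanSpace ℝ (Fin 3) → ℝ :=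
    (Metric.ball v r₁).indicator (fun w => 2^(m-2) * a^(2-m) * ‖v - w‖ ^ (-1:ℝ)) with hg1_def
  set g2 : EuclideanSpace ℝ (Fin 3) → ℝ :=
    (Metric.ball (0:EuclideanSpace ℝ (Fin 3)) r₂).indicator
      (fun w => (2/a) * ‖w‖^(2-m)) with hg2_def
  set g3 : EuclideanSpace ℝ (Fin 3) → ℝ :=
    ({x : EuclideanSpace ℝ (Fin 3) | r₂ ≤ ‖x‖}).indicator
      (fun w => 2 * ‖w‖^(1-m)) with hg3_def
  have hg1n : ∀ w, 0 ≤ g1 w := by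
    rw [hg1_def]
    exact indicator_nonneg fun w _ => mul_nonneg
      (mul_nonneg h2m.le (Real.rpow_nonneg ha0.le _)) (Real.rpow_nonneg (norm_nonneg _) _)
  have hg2n : ∀ w, 0 ≤ g2 w := by
    rw [hg2_def]
    exact indicator_nonneg fun w _ => mul_nonneg (by positivity)
      (Real.rpow_nonneg (norm_nonneg _) _)
  have hg3n : ∀ w, 0 ≤ g3 w := by
    rw [hg3_def]
    exact indicator_nonneg fun w _ => mul_nonneg (by norm_num)
      (Real.rpow_nonneg (norm_nonneg _) _)
  set f1 : EuclideanSpace ℝ (Fin 3) → ℝ :=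
    (Metric.ball (0:EuclideanSpace ℝ (Fin 3)) r₁).indicator (fun u => ‖u‖ ^ (-1:ℝ)) with hf1_def
  have hf1int : Integrable f1 := (integrable_indicator_iff measurableSet_ball).2 hI1
  have hg1eq : g1 = fun w => 2^(m-2) * a^(2-m) * f1 (v - w) := by
    funext w
    rw [hg1_def, hf1_def]
    by_cases hw : ‖v - w‖ < r₁
    · rw [indicator_of_mem (mem_ball_iff_norm.2 (by rwa [norm_sub_rev])),
        indicator_of_mem (mem_ball_zero_iff.2 hw)]
    · rw [indicator_of_notMem (fun hmem => hw (by
          rw [norm_sub_rev]; exact mem_ball_iff_norm.1 hmem)),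
        indicator_of_notMem (fun hmem => hw (mem_ball_zero_iff.1 hmem)), mul_zero]
  have hg1int : Integrable g1 := by
    rw [hg1eq]; exact (hf1int.comp_sub_left v).const_mul _
  have hg1val : ∫ w, g1 w = 2^(m-2)*a^(2-m) * (r₁^(-1:ℝ) * r₁^3 * c1) := by
    rw [hg1eq, MeasureTheory.integral_const_mul, integral_sub_left_eq_self f1 volume v,
      hf1_def, integral_indicator measurableSet_ball, hV1]
  have hg2int : Integrable g2 := by
    rw [hg2_def]
    exact (integrable_indicator_iff measurableSet_ball).2 (hI2.const_mul _)
  have hg2val : ∫ w, g2 w = (2/a) * (r₂^(2-m) * r₂^3 * c2) := by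
    rw [hg2_def, integral_indicator measurableSet_ball, MeasureTheory.integral_const_mul, hV2]
  have hg3int : Integrable g3 := by
    rw [hg3_def]
    exact (integrable_indicator_iff (measurableSet_normSet r₂)).2 (hI3.const_mul _)
  have hg3val : ∫ w, g3 w = 2 * (r₂^(1-m) * r₂^3 * c3) := by
    rw [hg3_def, integral_indicator (measurableSet_normSet r₂),
      MeasureTheory.integral_const_mul, hV3]
  -- pointwise a.e. comparison
  have hfnn : 0 ≤ᵐ[volume] fun w : EuclideanSpace ℝ (Fin 3) =>
      ⟪v, landauProj (v - w) v⟫ * h w / ‖v - w‖ :=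
    Filter.Eventually.of_forall fun w =>
      div_nonneg (mul_nonneg (inner_landauProj_nonneg v w) (hpos w)) (norm_nonneg _)
  have h0ae : ∀ᵐ w : EuclideanSpace ℝ (Fin 3), w ≠ (0:EuclideanSpace ℝ (Fin 3)) := by
    have hs : {w : EuclideanSpace ℝ (Fin 3) | ¬ w ≠ 0} = {(0:EuclideanSpace ℝ (Fin 3))} := by
      ext x; simp
    rw [MeasureTheory.ae_iff, hs]
    exact measure_singleton 0
  have hae : ∀ᵐ w : EuclideanSpace ℝ (Fin 3),
      ⟪v, landauProj (v - w) v⟫ * h w / ‖v - w‖ ≤ M * (g1 w + g2 w + g3 w) := by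
    filter_upwards [h0ae] with w hw0
    have hb0 : 0 < jap w := jap_pos w
    have hg1w := hg1n w
    have hg2w := hg2n w
    have hg3w := hg3n w
    have hsum_expand : M * (g1 w + g2 w + g3 w) = M*g1 w + M*g2 w + M*g3 w := by ring
    by_cases hwv : w = v
    · have hz : ‖v - w‖ = 0 := by rw [hwv, sub_self, norm_zero]
      rw [hz, div_zero, hsum_expand]
      have := mul_nonneg hM hg1w
      have := mul_nonneg hM hg2w
      have := mul_nonneg hM hg3w
      linarith
    · have hd : 0 < ‖v - w‖ := by
        rw [norm_pos_iff, sub_ne_zero]; exact fun e => hwv e.symm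
      have hnum : ⟪v, landauProj (v - w) v⟫ * h w ≤ M * (jap w)^(2-m) := by
        have hi1 : ⟪v, landauProj (v - w) v⟫ ≤ (jap w)^2 := by
          rw [jap_sq]; exact inner_landauProj_le v w
        have hb : h w ≤ M * (jap w)^(-m) := hbound w
        have step : ⟪v, landauProj (v - w) v⟫ * h w ≤ (jap w)^2 * (M * (jap w)^(-m)) :=
          mul_le_mul hi1 hb (hpos w) (sq_nonneg _)
        have e2 : ((jap w):ℝ)^(2:ℕ) * (jap w)^(-m) = (jap w)^(2-m) := by
          rw [← Real.rpow_natCast (jap w) 2, ← Real.rpow_add hb0]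
          congr 1 <;> push_cast <;> ring
        calc ⟪v, landauProj (v - w) v⟫ * h w ≤ (jap w)^2 * (M * (jap w)^(-m)) := step
          _ = M * ((jap w)^(2:ℕ) * (jap w)^(-m)) := by ring
          _ = M * (jap w)^(2-m) := by rw [e2]
      have hred : ⟪v, landauProj (v - w) v⟫ * h w / ‖v - w‖ ≤ M * (jap w)^(2-m) / ‖v - w‖ := by
        gcongr
      by_cases hc1 : ‖v - w‖ < r₁
      · have hmem : w ∈ Metric.ball v r₁ :=
          mem_ball_iff_norm.2 (by rwa [norm_sub_rev])
        have hlb : r₁ ≤ jap w := by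
          have hlip := jap_lip v w
          rw [← ha_def] at hlip
          rw [hr1_def]
          rw [hr1_def] at hc1
          linarith
        have hbq : (jap w)^(2-m) ≤ 2^(m-2) * a^(2-m) := by
          have h1 : (jap w)^(2-m) ≤ r₁^(2-m) :=
            Real.rpow_le_rpow_of_nonpos hr1 hlb (by linarith)
          have h2 : r₁^(2-m) = 2^(m-2) * a^(2-m) := by
            rw [hr1_def, div_eq_mul_inv, Real.mul_rpow ha0.le (by norm_num),
              Real.inv_rpow (by norm_num), ← Real.rpow_neg (by norm_num), neg_sub]
            ring
          rw [h2] at h1; exact h1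
        have hg1w_eq : g1 w = 2^(m-2)*a^(2-m) * ‖v - w‖^(-1:ℝ) := by
          rw [hg1_def, indicator_of_mem hmem]
        calc ⟪v, landauProj (v - w) v⟫ * h w / ‖v - w‖
            ≤ M * (jap w)^(2-m) / ‖v - w‖ := hred
          _ ≤ M * (2^(m-2)*a^(2-m)) / ‖v - w‖ := by gcongr
          _ = M * g1 w := by
              rw [hg1w_eq, Real.rpow_neg_one]
              field_simp
          _ ≤ M * (g1 w + g2 w + g3 w) := by
              rw [hsum_expand]
              have := mul_nonneg hM hg2w
              have := mul_nonneg hM hg3w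
              linarith
      · push_neg at hc1
        have hcd : 1/‖v - w‖ ≤ 2/a := by
          rw [div_le_div_iff₀ hd ha0, one_mul]
          rw [hr1_def] at hc1
          linarith
        by_cases hc2 : ‖w‖ < r₂
        · have hmem : w ∈ Metric.ball (0:EuclideanSpace ℝ (Fin 3)) r₂ :=
            mem_ball_zero_iff.2 hc2
          have hw0' : 0 < ‖w‖ := norm_pos_iff.2 hw0
          have hbq : (jap w)^(2-m) ≤ ‖w‖^(2-m) :=
            Real.rpow_le_rpow_of_nonpos hw0' (norm_le_jap w) (by linarith)
          have hg2w_eq : g2 w = (2/a) * ‖w‖^(2-m) := by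
            rw [hg2_def, indicator_of_mem hmem]
          have hXn : 0 ≤ M * ‖w‖^(2-m) := mul_nonneg hM (Real.rpow_nonneg (norm_nonneg w) _)
          calc ⟪v, landauProj (v - w) v⟫ * h w / ‖v - w‖
              ≤ M * (jap w)^(2-m) / ‖v - w‖ := hred
            _ ≤ M * ‖w‖^(2-m) / ‖v - w‖ := by gcongr
            _ = (M * ‖w‖^(2-m)) * (1/‖v - w‖) := by ring
            _ ≤ (M * ‖w‖^(2-m)) * (2/a) := mul_le_mul_of_nonneg_left hcd hXn
            _ = M * g2 w := by rw [hg2w_eq]; ring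
            _ ≤ M * (g1 w + g2 w + g3 w) := by
                rw [hsum_expand]
                have := mul_nonneg hM hg1w
                have := mul_nonneg hM hg3w
                linarith
        · push_neg at hc2
          have hmem : w ∈ {x : EuclideanSpace ℝ (Fin 3) | r₂ ≤ ‖x‖} := hc2
          have hw0' : 0 < ‖w‖ := lt_of_lt_of_le hr2 hc2
          have hbq : (jap w)^(2-m) ≤ ‖w‖^(2-m) :=
            Real.rpow_le_rpow_of_nonpos hw0' (norm_le_jap w) (by linarith)
          have hclow : 3/4 * ‖w‖ ≤ ‖v - w‖ := by
            have t1 : ‖w‖ - ‖v‖ ≤ ‖v - w‖ := by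
              have t0 := norm_sub_norm_le w v
              rw [norm_sub_rev w v] at t0
              linarith
            have t2 : ‖v‖ ≤ a := norm_le_jap v
            rw [hr2_def] at hc2
            linarith
          have he2 : ‖w‖^(2-m) * ‖w‖^(-1:ℝ) = ‖w‖^(1-m) := by
            rw [← Real.rpow_add hw0']; congr 1; ring
          have hg3w_eq : g3 w = 2 * ‖w‖^(1-m) := by
            rw [hg3_def, indicator_of_mem hmem]
          have hXn : 0 ≤ M * ‖w‖^(2-m) := mul_nonneg hM (Real.rpow_nonneg (norm_nonneg w) _)
          have h1mn : 0 ≤ ‖w‖^(1-m) := Real.rpow_nonneg (norm_nonneg w) _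
          calc ⟪v, landauProj (v - w) v⟫ * h w / ‖v - w‖
              ≤ M * (jap w)^(2-m) / ‖v - w‖ := hred
            _ ≤ M * ‖w‖^(2-m) / ‖v - w‖ := by gcongr
            _ ≤ M * ‖w‖^(2-m) / (3/4 * ‖w‖) :=
                div_le_div_of_nonneg_left hXn (by linarith) hclow
            _ = (4/3) * M * (‖w‖^(2-m) * ‖w‖^(-1:ℝ)) := by
                rw [Real.rpow_neg_one]
                field_simp
            _ = (4/3) * M * ‖w‖^(1-m) := by rw [he2]
            _ ≤ 2 * M * ‖w‖^(1-m) := by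
                have hMX : 0 ≤ M * ‖w‖^(1-m) := mul_nonneg hM h1mn
                linarith
            _ = M * g3 w := by rw [hg3w_eq]; ring
            _ ≤ M * (g1 w + g2 w + g3 w) := by
                rw [hsum_expand]
                have := mul_nonneg hM hg1w
                have := mul_nonneg hM hg2w
                linarith
  have hbig : Integrable (fun w : EuclideanSpace ℝ (Fin 3) => M * (g1 w + g2 w + g3 w)) :=
    ((hg1int.add hg2int).add hg3int).const_mul M
  have hIneq := integral_mono_of_nonneg hfnn hbig hae
  have hsum : ∫ w : EuclideanSpace ℝ (Fin 3), M * (g1 w + g2 w + g3 w)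
      = M * ((∫ w, g1 w) + (∫ w, g2 w) + (∫ w, g3 w)) := by
    have hadd12 : Integrable (fun w : EuclideanSpace ℝ (Fin 3) => g1 w + g2 w) :=
      hg1int.add hg2int
    have e1 : ∫ w : EuclideanSpace ℝ (Fin 3), (g1 w + g2 w + g3 w)
        = (∫ w, (g1 w + g2 w)) + ∫ w, g3 w := integral_add hadd12 hg3int
    have e2 : ∫ w : EuclideanSpace ℝ (Fin 3), (g1 w + g2 w)
        = (∫ w, g1 w) + ∫ w, g2 w := integral_add hg1int hg2int
    rw [MeasureTheory.integral_const_mul, e1, e2]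
  have hp24 : a^(2-m) * a^(2:ℕ) = a^(4-m) := by
    rw [← Real.rpow_natCast a 2, ← Real.rpow_add ha0]; congr 1 <;> push_cast <;> ring
  have hp53 : a^(2-m) * a^(3:ℕ) = a^(5-m) := by
    rw [← Real.rpow_natCast a 3, ← Real.rpow_add ha0]; congr 1 <;> push_cast <;> ring
  have hp45 : a^(5-m) = a^(4-m) * a := by
    rw [show (5-m) = (4-m)+1 from by ring, Real.rpow_add ha0, Real.rpow_one]
  have hp13 : a^(1-m) * a^(3:ℕ) = a^(4-m) := by
    rw [← Real.rpow_natCast a 3, ← Real.rpow_add ha0]; congr 1 <;> push_cast <;> ring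
  have ha4m : 0 ≤ a^(4-m) := Real.rpow_nonneg ha0.le _
  have hB1 : ∫ w, g1 w ≤ 2^(m-2)*c1 * a^(4-m) := by
    rw [hg1val]
    have e1 : r₁^(-1:ℝ) * r₁^3 = r₁^2 := by
      rw [Real.rpow_neg_one]
      field_simp
    rw [e1]
    have e2 : r₁^2 ≤ a^(2:ℕ) := by
      rw [hr1_def]; nlinarith
    calc 2^(m-2)*a^(2-m) * (r₁^2 * c1)
        ≤ 2^(m-2)*a^(2-m) * (a^(2:ℕ) * c1) := by
          refine mul_le_mul_of_nonneg_left ?_ (mul_nonneg h2m.le (Real.rpow_nonneg ha0.le _))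
          exact mul_le_mul_of_nonneg_right e2 hc1n
      _ = 2^(m-2)*c1 * (a^(2-m) * a^(2:ℕ)) := by ring
      _ = 2^(m-2)*c1 * a^(4-m) := by rw [hp24]
  have hB2 : ∫ w, g2 w = 128*4^(2-m)*c2 * a^(4-m) := by
    rw [hg2val]
    have e1 : r₂^(2-m) = 4^(2-m) * a^(2-m) := by
      rw [hr2_def, Real.mul_rpow (by norm_num) ha0.le]
    have e2 : r₂^3 = 64 * a^(3:ℕ) := by rw [hr2_def]; ring
    rw [e1, e2]
    have e3 : a^(2-m)*a^(3:ℕ) = a^(4-m)*a := by rw [hp53, hp45]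
    calc (2/a) * (4^(2-m)*a^(2-m) * (64*a^(3:ℕ)) * c2)
        = (128*4^(2-m)*c2) * (a^(2-m)*a^(3:ℕ)) / a := by ring
      _ = (128*4^(2-m)*c2) * (a^(4-m)*a) / a := by rw [e3]
      _ = 128*4^(2-m)*c2 * a^(4-m) := by
          field_simp
  have hB3 : ∫ w, g3 w = 128*4^(1-m)*c3 * a^(4-m) := by
    rw [hg3val]
    have e1 : r₂^(1-m) = 4^(1-m) * a^(1-m) := by
      rw [hr2_def, Real.mul_rpow (by norm_num) ha0.le]
    have e2 : r₂^3 = 64 * a^(3:ℕ) := by rw [hr2_def]; ring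
    rw [e1, e2]
    calc 2 * (4^(1-m)*a^(1-m) * (64*a^(3:ℕ)) * c3)
        = 128*4^(1-m)*c3 * (a^(1-m)*a^(3:ℕ)) := by ring
      _ = 128*4^(1-m)*c3 * a^(4-m) := by rw [hp13]
  have htot : (∫ w : EuclideanSpace ℝ (Fin 3),
      ⟪v, landauProj (v - w) v⟫ * h w / ‖v - w‖) ≤ M * (K * a^(4-m)) := by
    refine hIneq.trans ?_
    rw [hsum]
    refine mul_le_mul_of_nonneg_left ?_ hM
    rw [hK_def, hB2, hB3]
    have expand : (2^(m-2)*c1 + 128*4^(2-m)*c2 + 128*4^(1-m)*c3)*a^(4-m)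
        = 2^(m-2)*c1*a^(4-m) + 128*4^(2-m)*c2*a^(4-m) + 128*4^(1-m)*c3*a^(4-m) := by ring
    rw [expand]
    linarith [hB1]
  have hMa : 0 ≤ M * a^(4-m) := mul_nonneg hM ha4m
  calc (1/(8*Real.pi)) * (∫ w : EuclideanSpace ℝ (Fin 3),
        ⟪v, landauProj (v - w) v⟫ * h w / ‖v - w‖)
      ≤ (1/(8*Real.pi)) * (M * (K * a^(4-m))) :=
        mul_le_mul_of_nonneg_left htot (by positivity)
    _ = (K/(8*Real.pi)) * (M * a^(4-m)) := by ring
    _ ≤ (K/(8*Real.pi) + 1) * (M * a^(4-m)) := by nlinarith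
    _ = (K/(8*Real.pi) + 1) * M * a^(4-m) := by ring
end

section
/- Fix m > 2 and p > 3/2. Let h : ℝ³ → [0,∞) be measurable with ⟨·⟩^m h ∈ L^p(ℝ³). Define A[h](v) = (1/8π)∫_{ℝ³} Π(v-w)|v-w|^{-1} h(w) dw. Then there is C = C(m,p) such that ‖A[h]‖_{L^∞} ≤ C ‖⟨·⟩^m h‖_{L^p}, i.e. sup_v of the operator norm of A[h](v) is bounded by the weighted L^p norm of h. -/
open MeasureTheory Set RealInnerProductSpace

section LandauAux

open Metric
open scoped ENNReal

local notation "E3" => EuclideanSpace ℝ (Fin 3)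

lemma norm_landauProj_le (z y : EuclideanSpace ℝ (Fin 3)) : ‖landauProj z y‖ ≤ ‖y‖ := by
  by_cases hz : z = 0
  · simp [landauProj, hz]
  · have hz2 : (0:ℝ) < ‖z‖ ^ 2 := pow_pos (norm_pos_iff.mpr hz) 2
    have key : ‖landauProj z y‖ ^ 2 = ‖y‖ ^ 2 - ⟪z, y⟫ ^ 2 / ‖z‖ ^ 2 := by
      rw [landauProj, norm_sub_sq_real, real_inner_smul_right, norm_smul, mul_pow,
        Real.norm_eq_abs, sq_abs, real_inner_comm y z]
      field_simp
      ring
    have h1 : ‖landauProj z y‖ ^ 2 ≤ ‖y‖ ^ 2 := by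
      rw [key]
      have : 0 ≤ ⟪z, y⟫ ^ 2 / ‖z‖ ^ 2 := by positivity
      linarith
    nlinarith [norm_nonneg (landauProj z y), norm_nonneg y]

lemma abs_inner_landauProj_le (z x y : EuclideanSpace ℝ (Fin 3)) :
    |⟪x, landauProj z y⟫| ≤ ‖x‖ * ‖y‖ :=
  (abs_real_inner_le_norm _ _).trans
    (mul_le_mul_of_nonneg_left (norm_landauProj_le z y) (norm_nonneg x))

lemma finite_lintegral_rpow_norm_ball {q : ℝ} (hq0 : 0 < q) (hq3 : q < 3) :
    ∫⁻ z : E3 in ball 0 1, ENNReal.ofReal (‖z‖ ^ (-q)) < ∞ := by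
  set μ := (volume : Measure E3).restrict (ball 0 1) with hμ
  have hmeas : Measurable fun z : E3 => ‖z‖ ^ (-q) := by fun_prop
  have hnn : 0 ≤ᵐ[μ] fun z : E3 => ‖z‖ ^ (-q) :=
    Filter.Eventually.of_forall fun z => Real.rpow_nonneg (norm_nonneg _) _
  have : ∫⁻ z : E3 in ball 0 1, ENNReal.ofReal (‖z‖ ^ (-q)) =
      ∫⁻ t in Ioi (0:ℝ), μ {a : E3 | t ≤ ‖a‖ ^ (-q)} :=
    lintegral_eq_lintegral_meas_le μ hnn hmeas.aemeasurable
  rw [this]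
  calc ∫⁻ t in Ioi (0:ℝ), μ {a : E3 | t ≤ ‖a‖ ^ (-q)}
      ≤ ∫⁻ t in Ioc (0:ℝ) 1 ∪ Ioi 1, μ {a : E3 | t ≤ ‖a‖ ^ (-q)} :=
        lintegral_mono_set Ioi_subset_Ioc_union_Ioi
    _ ≤ (∫⁻ t in Ioc (0:ℝ) 1, μ {a : E3 | t ≤ ‖a‖ ^ (-q)})
        + ∫⁻ t in Ioi (1:ℝ), μ {a : E3 | t ≤ ‖a‖ ^ (-q)} := lintegral_union_le _ _ _
    _ < ∞ := ENNReal.add_lt_top.2 ⟨?_, ?_⟩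
  · calc (∫⁻ t in Ioc (0:ℝ) 1, μ {a : E3 | t ≤ ‖a‖ ^ (-q)})
        ≤ ∫⁻ _ in Ioc (0:ℝ) 1, volume (ball (0:E3) 1) := by
          refine setLIntegral_mono' measurableSet_Ioc fun t _ => ?_
          exact (measure_mono (subset_univ _)).trans_eq (Measure.restrict_apply_univ _)
      _ = volume (ball (0:E3) 1) * volume (Ioc (0:ℝ) 1) := setLIntegral_const _ _
      _ < ∞ := by
          rw [Real.volume_Ioc]
          exact ENNReal.mul_lt_top measure_ball_lt_top (by simp)
  · have key : ∀ t ∈ Ioi (1:ℝ), μ {a : E3 | t ≤ ‖a‖ ^ (-q)} ≤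
        ENNReal.ofReal (t ^ (-(3/q))) * volume (ball (0:E3) 1) := by
      intro t ht
      have ht1 : (1:ℝ) < t := ht
      have ht0 : (0:ℝ) < t := lt_trans one_pos ht1
      have hsub : {a : E3 | t ≤ ‖a‖ ^ (-q)} ⊆ closedBall 0 (t ^ (-q⁻¹)) := by
        intro a ha
        simp only [mem_setOf_eq] at ha
        have ha0 : a ≠ 0 := by
          rintro rfl
          rw [norm_zero, Real.zero_rpow (neg_ne_zero.mpr hq0.ne')] at ha
          linarith
        have hna : (0:ℝ) < ‖a‖ := norm_pos_iff.mpr ha0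
        rw [mem_closedBall_zero_iff]
        have h2 : (‖a‖ ^ (-q)) ^ (-q⁻¹) ≤ t ^ (-q⁻¹) :=
          Real.rpow_le_rpow_of_nonpos ht0 ha (neg_nonpos_of_nonneg (inv_nonneg.mpr hq0.le))
        rwa [← Real.rpow_mul hna.le, neg_mul_neg, mul_inv_cancel₀ hq0.ne', Real.rpow_one] at h2
      calc μ {a : E3 | t ≤ ‖a‖ ^ (-q)} ≤ volume (closedBall (0:E3) (t ^ (-q⁻¹))) :=
            (Measure.restrict_apply_le _ _).trans (measure_mono hsub)
        _ = ENNReal.ofReal ((t ^ (-q⁻¹)) ^ (3:ℕ)) * volume (ball (0:E3) 1) := by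
            rw [Measure.addHaar_closedBall _ _ (Real.rpow_nonneg ht0.le _),
              finrank_euclideanSpace_fin]
        _ = ENNReal.ofReal (t ^ (-(3/q))) * volume (ball (0:E3) 1) := by
            congr 2
            rw [← Real.rpow_natCast (t ^ (-q⁻¹)) 3, ← Real.rpow_mul ht0.le]
            congr 1
            push_cast
            field_simp
    calc ∫⁻ t in Ioi (1:ℝ), μ {a : E3 | t ≤ ‖a‖ ^ (-q)}
        ≤ ∫⁻ t in Ioi (1:ℝ), ENNReal.ofReal (t ^ (-(3/q))) * volume (ball (0:E3) 1) :=
          setLIntegral_mono' measurableSet_Ioi key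
      _ = (∫⁻ t in Ioi (1:ℝ), ENNReal.ofReal (t ^ (-(3/q)))) * volume (ball (0:E3) 1) :=
          lintegral_mul_const' _ _ measure_ball_lt_top.ne
      _ < ∞ := by
          refine ENNReal.mul_lt_top ?_ measure_ball_lt_top
          refine IntegrableOn.setLIntegral_lt_top ?_
          refine integrableOn_Ioi_rpow_of_lt ?_ one_pos
          have : (1:ℝ) < 3 / q := (one_lt_div hq0).mpr hq3
          linarith

lemma landau_conv_bound {s q : ℝ} (hq0 : 0 < q) (hq3 : q < 3) (hs0 : 0 < s) (hsq : 3 < q + s) :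
    ∃ K : ℝ≥0∞, K ≠ ⊤ ∧ ∀ v : E3,
      ∫⁻ w : E3, ENNReal.ofReal ((1 + ‖w‖ ^ 2) ^ (-s/2) * ‖v - w‖ ^ (-q)) ≤ K := by
  set r := q + s with hrdef
  have hr0 : (0:ℝ) < r := by positivity
  have hr3 : (3:ℝ) < r := hsq
  have hIint : Integrable (fun w : E3 => (1 + ‖w‖ ^ 2) ^ (-r/2)) := by
    apply integrable_rpow_neg_one_add_norm_sq
    rw [finrank_euclideanSpace_fin]
    exact_mod_cast hr3
  set I := ∫⁻ w : E3, ENNReal.ofReal ((1 + ‖w‖ ^ 2) ^ (-r/2)) with hIdef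
  have hIfin : I < ∞ := hIint.lintegral_lt_top
  have hK1fin := finite_lintegral_rpow_norm_ball hq0 hq3
  set K1 := ∫⁻ z : E3 in ball 0 1, ENNReal.ofReal (‖z‖ ^ (-q)) with hK1def
  have hab : (r/q).HolderConjugate (r/s) := by
    rw [Real.holderConjugate_iff]
    constructor
    · exact (one_lt_div hq0).mpr (by linarith)
    · rw [inv_div, inv_div, ← add_div, hrdef]
      field_simp
  refine ⟨K1 + ENNReal.ofReal (2 ^ (q/2)) * (I ^ (q/r) * I ^ (s/r)), ?_, ?_⟩
  · refine ENNReal.add_ne_top.mpr ⟨hK1fin.ne, ENNReal.mul_ne_top ENNReal.ofReal_ne_top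
      (ENNReal.mul_ne_top ?_ ?_)⟩
    · exact (ENNReal.rpow_lt_top_of_nonneg (by positivity) hIfin.ne).ne
    · exact (ENNReal.rpow_lt_top_of_nonneg (by positivity) hIfin.ne).ne
  · intro v
    have hmp : MeasurePreserving (fun w : E3 => v - w) volume volume :=
      Measure.measurePreserving_sub_left volume v
    set g : E3 → ℝ≥0∞ := (ball (0:E3) 1).indicator (fun z => ENNReal.ofReal (‖z‖ ^ (-q)))
      with hgdef
    have hgmeas : Measurable g := by
      apply Measurable.indicator ?_ measurableSet_ball
      fun_prop
    set f1 : E3 → ℝ≥0∞ := fun w => ENNReal.ofReal ((1 + ‖v - w‖ ^ 2) ^ (-q/2)) with hf1def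
    set f2 : E3 → ℝ≥0∞ := fun w => ENNReal.ofReal ((1 + ‖w‖ ^ 2) ^ (-s/2)) with hf2def
    have hf1meas : Measurable f1 := by fun_prop
    have hf2meas : Measurable f2 := by fun_prop
    -- pointwise bound
    have hpt : ∀ w : E3, ENNReal.ofReal ((1 + ‖w‖ ^ 2) ^ (-s/2) * ‖v - w‖ ^ (-q)) ≤
        g (v - w) + ENNReal.ofReal (2 ^ (q/2)) * (f1 w * f2 w) := by
      intro w
      rcases lt_or_ge ‖v - w‖ 1 with hd | hd
      · refine le_trans ?_ le_self_add
        rw [hgdef, indicator_of_mem (mem_ball_zero_iff.mpr hd)]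
        apply ENNReal.ofReal_le_ofReal
        apply mul_le_of_le_one_left (Real.rpow_nonneg (norm_nonneg _) _)
        exact Real.rpow_le_one_of_one_le_of_nonpos (by nlinarith [sq_nonneg ‖w‖]) (by linarith)
      · refine le_trans ?_ le_add_self
        have hd0 : (0:ℝ) < ‖v - w‖ := lt_of_lt_of_le one_pos hd
        set d := ‖v - w‖ with hddef
        have hA : (0:ℝ) < d ^ q := Real.rpow_pos_of_pos hd0 _
        have hB : (0:ℝ) < (1 + d ^ 2) ^ (q/2) := Real.rpow_pos_of_pos (by positivity) _
        have hc : (0:ℝ) < 2 ^ (q/2) := Real.rpow_pos_of_pos two_pos _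
        have hBcA : (1 + d ^ 2) ^ (q/2) ≤ 2 ^ (q/2) * d ^ q := by
          have h1 : (1:ℝ) + d ^ 2 ≤ 2 * d ^ 2 := by nlinarith
          have h2 : ((1:ℝ) + d ^ 2) ^ (q/2) ≤ (2 * d ^ 2) ^ (q/2) :=
            Real.rpow_le_rpow (by positivity) h1 (by positivity)
          have heq : ((2:ℝ) * d ^ 2) ^ (q/2) = 2 ^ (q/2) * d ^ q := by
            rw [Real.mul_rpow (by norm_num) (sq_nonneg d)]
            congr 1
            rw [← Real.rpow_natCast d 2, ← Real.rpow_mul hd0.le]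
            congr 1
            push_cast
            ring
          rwa [heq] at h2
        have hsub : d ^ (-q) ≤ 2 ^ (q/2) * (1 + d ^ 2) ^ (-q/2) := by
          rw [Real.rpow_neg hd0.le, show -q/2 = -(q/2) by ring,
            Real.rpow_neg (by positivity : (0:ℝ) ≤ 1 + d ^ 2)]
          have h3 : (d ^ q)⁻¹ * (1 + d ^ 2) ^ (q/2) ≤ 2 ^ (q/2) := by
            have h4 := mul_le_mul_of_nonneg_left hBcA (inv_nonneg.mpr hA.le)
            rwa [show (d ^ q)⁻¹ * (2 ^ (q/2) * d ^ q) = 2 ^ (q/2) by field_simp] at h4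
          calc (d ^ q)⁻¹ = ((d ^ q)⁻¹ * (1 + d ^ 2) ^ (q/2)) * ((1 + d ^ 2) ^ (q/2))⁻¹ := by
                field_simp
            _ ≤ 2 ^ (q/2) * ((1 + d ^ 2) ^ (q/2))⁻¹ :=
                mul_le_mul_of_nonneg_right h3 (inv_nonneg.mpr hB.le)
        have hreal : (1 + ‖w‖ ^ 2) ^ (-s/2) * d ^ (-q) ≤
            2 ^ (q/2) * ((1 + d ^ 2) ^ (-q/2) * (1 + ‖w‖ ^ 2) ^ (-s/2)) := by
          have h5 := mul_le_mul_of_nonneg_left hsub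
            (Real.rpow_nonneg (by positivity : (0:ℝ) ≤ 1 + ‖w‖ ^ 2) (-s/2))
          calc (1 + ‖w‖ ^ 2) ^ (-s/2) * d ^ (-q)
              ≤ (1 + ‖w‖ ^ 2) ^ (-s/2) * (2 ^ (q/2) * (1 + d ^ 2) ^ (-q/2)) := h5
            _ = 2 ^ (q/2) * ((1 + d ^ 2) ^ (-q/2) * (1 + ‖w‖ ^ 2) ^ (-s/2)) := by ring
        calc ENNReal.ofReal ((1 + ‖w‖ ^ 2) ^ (-s/2) * d ^ (-q))
            ≤ ENNReal.ofReal (2 ^ (q/2) * ((1 + d ^ 2) ^ (-q/2) * (1 + ‖w‖ ^ 2) ^ (-s/2))) :=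
              ENNReal.ofReal_le_ofReal hreal
          _ = ENNReal.ofReal (2 ^ (q/2)) * (f1 w * f2 w) := by
              rw [ENNReal.ofReal_mul hc.le, ENNReal.ofReal_mul
                (Real.rpow_nonneg (by positivity) _)]
    -- integrate
    calc ∫⁻ w : E3, ENNReal.ofReal ((1 + ‖w‖ ^ 2) ^ (-s/2) * ‖v - w‖ ^ (-q))
        ≤ ∫⁻ w : E3, (g (v - w) + ENNReal.ofReal (2 ^ (q/2)) * (f1 w * f2 w)) :=
          lintegral_mono hpt
      _ = (∫⁻ w : E3, g (v - w)) +
          ENNReal.ofReal (2 ^ (q/2)) * ∫⁻ w : E3, f1 w * f2 w := by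
          have hgc : Measurable fun w : E3 => g (v - w) := hgmeas.comp (by fun_prop)
          rw [lintegral_add_left hgc, lintegral_const_mul' _ _ ENNReal.ofReal_ne_top]
      _ ≤ K1 + ENNReal.ofReal (2 ^ (q/2)) * (I ^ (q/r) * I ^ (s/r)) := by
          gcongr
          · refine le_of_eq ((hmp.lintegral_comp hgmeas).trans ?_)
            rw [hgdef]
            exact lintegral_indicator measurableSet_ball _
          · -- Hölder
            have hold := ENNReal.lintegral_mul_le_Lp_mul_Lq volume hab
              hf1meas.aemeasurable hf2meas.aemeasurable
            have e1' : ∀ w : E3, ENNReal.ofReal ((1 + ‖v - w‖ ^ 2) ^ (-q/2)) ^ (r/q) =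
                ENNReal.ofReal ((1 + ‖v - w‖ ^ 2) ^ (-r/2)) := by
              intro w
              calc ENNReal.ofReal ((1 + ‖v - w‖ ^ 2) ^ (-q/2)) ^ (r/q)
                  = ENNReal.ofReal (((1 + ‖v - w‖ ^ 2) ^ (-q/2)) ^ (r/q)) :=
                    ENNReal.ofReal_rpow_of_nonneg (Real.rpow_nonneg (by positivity) _)
                      (by positivity)
                _ = ENNReal.ofReal ((1 + ‖v - w‖ ^ 2) ^ (-r/2)) := by
                    rw [← Real.rpow_mul (by positivity),
                      show -q/2 * (r/q) = -r/2 by field_simp]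
            have e1 : ∫⁻ w : E3, f1 w ^ (r/q) = I := by
              simp_rw [hf1def]
              simp_rw [e1']
              exact hmp.lintegral_comp
                (f := fun z : E3 => ENNReal.ofReal ((1 + ‖z‖ ^ 2) ^ (-r/2))) (by fun_prop)
            have e2' : ∀ w : E3, ENNReal.ofReal ((1 + ‖w‖ ^ 2) ^ (-s/2)) ^ (r/s) =
                ENNReal.ofReal ((1 + ‖w‖ ^ 2) ^ (-r/2)) := by
              intro w
              calc ENNReal.ofReal ((1 + ‖w‖ ^ 2) ^ (-s/2)) ^ (r/s)
                  = ENNReal.ofReal (((1 + ‖w‖ ^ 2) ^ (-s/2)) ^ (r/s)) :=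
                    ENNReal.ofReal_rpow_of_nonneg (Real.rpow_nonneg (by positivity) _)
                      (by positivity)
                _ = ENNReal.ofReal ((1 + ‖w‖ ^ 2) ^ (-r/2)) := by
                    rw [← Real.rpow_mul (by positivity),
                      show -s/2 * (r/s) = -r/2 by field_simp]
            have e2 : ∫⁻ w : E3, f2 w ^ (r/s) = I := by
              simp_rw [hf2def]
              simp_rw [e2']
              exact hIdef.symm
            rw [one_div_div, one_div_div] at hold
            calc ∫⁻ w : E3, f1 w * f2 w ≤
                (∫⁻ w : E3, f1 w ^ (r/q)) ^ (q/r) * (∫⁻ w : E3, f2 w ^ (r/s)) ^ (s/r) := hold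
              _ = I ^ (q/r) * I ^ (s/r) := by rw [e1, e2]

/-- For `m > 2`, `p > 3/2`: the operator norm of `A[h](v)` is bounded, uniformly in `v`,
by the weighted norm `‖⟨·⟩^m h‖_{L^p}`. -/
theorem landau_diffusion_Linfty_bound (m p : ℝ) (hm : 2 < m) (hp : 3/2 < p) :
    ∃ C > 0, ∀ h : EuclideanSpace ℝ (Fin 3) → ℝ,
      Measurable h → (∀ w, 0 ≤ h w) →
      Integrable (fun w : EuclideanSpace ℝ (Fin 3) =>
        (((1 + ‖w‖ ^ 2) ^ ((1:ℝ)/2)) ^ m * h w) ^ p) →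
      ∀ (v x y : EuclideanSpace ℝ (Fin 3)),
        |(1 / (8 * Real.pi)) *
            (∫ w : EuclideanSpace ℝ (Fin 3),
              ⟪x, landauProj (v - w) y⟫ * h w / ‖v - w‖)|
          ≤ C * ((∫ w : EuclideanSpace ℝ (Fin 3),
                (((1 + ‖w‖ ^ 2) ^ ((1:ℝ)/2)) ^ m * h w) ^ p) ^ (1/p)) * ‖x‖ * ‖y‖ := by
  have hp1 : 1 < p := by linarith
  set q : ℝ := p / (p - 1) with hqdef
  have hq0 : 0 < q := div_pos (by linarith) (by linarith)
  have hq1 : 1 < q := (one_lt_div (by linarith)).mpr (by linarith)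
  have hq3 : q < 3 := by
    rw [hqdef, div_lt_iff₀ (by linarith)]
    linarith
  have hpq : p.HolderConjugate q := (Real.holderConjugate_iff_eq_conjExponent hp1).mpr hqdef
  set s : ℝ := m * q with hsdef
  have hs0 : 0 < s := by positivity
  have hqs : 3 < q + s := by nlinarith
  obtain ⟨K, hKfin, hK⟩ := landau_conv_bound hq0 hq3 hs0 hqs
  refine ⟨(K ^ (1/q)).toReal + 1, by positivity, ?_⟩
  intro h hmeas hnn hint v x y
  set F : E3 → ℝ := fun w => ((1 + ‖w‖ ^ 2) ^ ((1:ℝ)/2)) ^ m * h w with hFdef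
  set G : E3 → ℝ := fun w => ((1 + ‖w‖ ^ 2) ^ ((1:ℝ)/2)) ^ (-m) * ‖v - w‖⁻¹ with hGdef
  have hF0 : ∀ w, 0 ≤ F w := fun w =>
    mul_nonneg (Real.rpow_nonneg (Real.rpow_nonneg (by positivity) _) _) (hnn w)
  have hG0 : ∀ w, 0 ≤ G w := fun w =>
    mul_nonneg (Real.rpow_nonneg (Real.rpow_nonneg (by positivity) _) _)
      (inv_nonneg.mpr (norm_nonneg _))
  set R : ℝ := (∫ w : E3, F w ^ p) ^ (1/p) with hRdef
  have hRint0 : 0 ≤ ∫ w : E3, F w ^ p :=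
    integral_nonneg fun w => Real.rpow_nonneg (hF0 w) _
  have hR0 : 0 ≤ R := Real.rpow_nonneg hRint0 _
  set f : E3 → ℝ := fun w => ⟪x, landauProj (v - w) y⟫ * h w / ‖v - w‖ with hfdef
  -- pointwise bound
  have hFG : ∀ w : E3, h w / ‖v - w‖ = F w * G w := by
    intro w
    have hb : (0:ℝ) < ((1 + ‖w‖ ^ 2) ^ ((1:ℝ)/2)) ^ m :=
      Real.rpow_pos_of_pos (Real.rpow_pos_of_pos (by positivity) _) _
    rw [hFdef, hGdef]
    dsimp only
    rw [Real.rpow_neg (Real.rpow_nonneg (by positivity) _)]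
    field_simp
  have hpt : ∀ w : E3, ENNReal.ofReal ‖f w‖ ≤
      ENNReal.ofReal (‖x‖ * ‖y‖) * (ENNReal.ofReal (F w) * ENNReal.ofReal (G w)) := by
    intro w
    rw [← ENNReal.ofReal_mul (hF0 w),
      ← ENNReal.ofReal_mul (mul_nonneg (norm_nonneg x) (norm_nonneg y))]
    apply ENNReal.ofReal_le_ofReal
    calc ‖f w‖ = |⟪x, landauProj (v - w) y⟫| * (h w / ‖v - w‖) := by
          rw [hfdef]
          dsimp only
          rw [Real.norm_eq_abs, abs_div, abs_mul, abs_of_nonneg (hnn w),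
            abs_of_nonneg (norm_nonneg (v - w)), mul_div_assoc]
      _ ≤ ‖x‖ * ‖y‖ * (h w / ‖v - w‖) :=
          mul_le_mul_of_nonneg_right (abs_inner_landauProj_le _ x y)
            (div_nonneg (hnn w) (norm_nonneg _))
      _ = ‖x‖ * ‖y‖ * (F w * G w) := by rw [hFG w]
  -- measurability
  have hFmeas : Measurable fun w : E3 => ENNReal.ofReal (F w) := by
    apply Measurable.ennreal_ofReal
    rw [hFdef]
    fun_prop
  have hGmeas : Measurable fun w : E3 => ENNReal.ofReal (G w) := by
    apply Measurable.ennreal_ofReal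
    rw [hGdef]
    fun_prop
  -- the Lp factor
  have eF : (∫⁻ w : E3, ENNReal.ofReal (F w) ^ p) ^ (1/p) = ENNReal.ofReal R := by
    have e1 : ∀ w : E3, ENNReal.ofReal (F w) ^ p = ENNReal.ofReal (F w ^ p) := fun w =>
      ENNReal.ofReal_rpow_of_nonneg (hF0 w) (by positivity)
    simp_rw [e1]
    rw [← ofReal_integral_eq_lintegral_ofReal hint
      (Filter.Eventually.of_forall fun w => Real.rpow_nonneg (hF0 w) _)]
    rw [ENNReal.ofReal_rpow_of_nonneg hRint0 (by positivity)]
  -- the Lq factor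
  have hGq : ∀ w : E3, ENNReal.ofReal (G w) ^ q =
      ENNReal.ofReal ((1 + ‖w‖ ^ 2) ^ (-s/2) * ‖v - w‖ ^ (-q)) := by
    intro w
    rw [ENNReal.ofReal_rpow_of_nonneg (hG0 w) (by positivity)]
    congr 1
    rw [hGdef]
    dsimp only
    rw [Real.mul_rpow (Real.rpow_nonneg (Real.rpow_nonneg (by positivity) _) _)
      (inv_nonneg.mpr (norm_nonneg _))]
    congr 1
    · rw [← Real.rpow_mul (Real.rpow_nonneg (by positivity) _),
        ← Real.rpow_mul (by positivity : (0:ℝ) ≤ 1 + ‖w‖ ^ 2)]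
      congr 1
      rw [hsdef]
      ring
    · rw [Real.inv_rpow (norm_nonneg _), ← Real.rpow_neg (norm_nonneg _)]
  have eG : (∫⁻ w : E3, ENNReal.ofReal (G w) ^ q) ^ (1/q) ≤ K ^ (1/q) := by
    apply ENNReal.rpow_le_rpow ?_ (by positivity)
    calc ∫⁻ w : E3, ENNReal.ofReal (G w) ^ q
        = ∫⁻ w : E3, ENNReal.ofReal ((1 + ‖w‖ ^ 2) ^ (-s/2) * ‖v - w‖ ^ (-q)) := by
          simp_rw [hGq]
      _ ≤ K := hK v
  -- main lintegral bound
  have hL : (∫⁻ w : E3, ENNReal.ofReal ‖f w‖) ≤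
      ENNReal.ofReal (‖x‖ * ‖y‖) * (ENNReal.ofReal R * K ^ (1/q)) := by
    calc ∫⁻ w : E3, ENNReal.ofReal ‖f w‖
        ≤ ∫⁻ w : E3, ENNReal.ofReal (‖x‖ * ‖y‖) *
            (ENNReal.ofReal (F w) * ENNReal.ofReal (G w)) := lintegral_mono hpt
      _ = ENNReal.ofReal (‖x‖ * ‖y‖) *
            ∫⁻ w : E3, ENNReal.ofReal (F w) * ENNReal.ofReal (G w) :=
          lintegral_const_mul' _ _ ENNReal.ofReal_ne_top
      _ ≤ ENNReal.ofReal (‖x‖ * ‖y‖) * (ENNReal.ofReal R * K ^ (1/q)) := by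
          gcongr
          calc ∫⁻ w : E3, ENNReal.ofReal (F w) * ENNReal.ofReal (G w)
              ≤ (∫⁻ w : E3, ENNReal.ofReal (F w) ^ p) ^ (1/p) *
                (∫⁻ w : E3, ENNReal.ofReal (G w) ^ q) ^ (1/q) :=
                ENNReal.lintegral_mul_le_Lp_mul_Lq volume hpq hFmeas.aemeasurable
                  hGmeas.aemeasurable
            _ ≤ ENNReal.ofReal R * K ^ (1/q) := by
                rw [eF]
                exact mul_le_mul_right eG _
  -- pass to real numbers
  have hKq : K ^ (1/q) ≠ ⊤ := (ENNReal.rpow_lt_top_of_nonneg (by positivity) hKfin).ne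
  have hBne : ENNReal.ofReal (‖x‖ * ‖y‖) * (ENNReal.ofReal R * K ^ (1/q)) ≠ ⊤ :=
    ENNReal.mul_ne_top ENNReal.ofReal_ne_top (ENNReal.mul_ne_top ENNReal.ofReal_ne_top hKq)
  have habs : |∫ w : E3, f w| ≤ ‖x‖ * ‖y‖ * (R * (K ^ (1/q)).toReal) := by
    calc |∫ w : E3, f w| = ‖∫ w : E3, f w‖ := (Real.norm_eq_abs _).symm
      _ ≤ (∫⁻ w : E3, ENNReal.ofReal ‖f w‖).toReal := norm_integral_le_lintegral_norm f
      _ ≤ (ENNReal.ofReal (‖x‖ * ‖y‖) * (ENNReal.ofReal R * K ^ (1/q))).toReal :=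
          ENNReal.toReal_mono hBne hL
      _ = ‖x‖ * ‖y‖ * (R * (K ^ (1/q)).toReal) := by
          rw [ENNReal.toReal_mul, ENNReal.toReal_mul,
            ENNReal.toReal_ofReal (mul_nonneg (norm_nonneg x) (norm_nonneg y)),
            ENNReal.toReal_ofReal hR0]
  -- conclude
  have hpi : (0:ℝ) < 8 * Real.pi := by positivity
  have hpi1 : 1 / (8 * Real.pi) ≤ 1 := by
    rw [div_le_one hpi]
    nlinarith [Real.pi_gt_three]
  have hKt : (0:ℝ) ≤ (K ^ (1/q)).toReal := ENNReal.toReal_nonneg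
  calc |1 / (8 * Real.pi) * ∫ w : E3, f w|
      = 1 / (8 * Real.pi) * |∫ w : E3, f w| := by
        rw [abs_mul, abs_of_pos (by positivity : (0:ℝ) < 1 / (8 * Real.pi))]
    _ ≤ 1 * |∫ w : E3, f w| := by
        apply mul_le_mul_of_nonneg_right hpi1 (abs_nonneg _)
    _ = |∫ w : E3, f w| := one_mul _
    _ ≤ ‖x‖ * ‖y‖ * (R * (K ^ (1/q)).toReal) := habs
    _ ≤ ((K ^ (1/q)).toReal + 1) * R * ‖x‖ * ‖y‖ := by
        nlinarith [norm_nonneg x, norm_nonneg y, mul_nonneg (norm_nonneg x) (norm_nonneg y),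
          mul_nonneg (mul_nonneg (norm_nonneg x) (norm_nonneg y)) hR0]

end LandauAux
end
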